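/- arXiv:1112.1278 — 4 statements merged into one kernel-verified Lean document; each statement's English description precedes it below -/
import Mathlib

section
/- For an arbitrary matrix V ∈ ℝ^{k×(n-k)}, the composition Φ(τ_V) equals V. In particular, the map τ : ℝ^{k×(n-k)} → ℝ^{C(n,k)} is injective. -/
open scoped Classical

/-- The tropical determinant of a `k × k` matrix over `ℝ ∪ {∞}`:
the minimum over all permutations `ω` of `∑ i, A i (ω i)`. -/
noncomputable def tdet {k : ℕ} (A : Matrix (Fin k) (Fin k) (WithTop ℝ)) : WithTop ℝ :=
  Finset.univ.inf fun ω : Equiv.Perm (Fin k) => ∑ i, A i (ω i)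

/-- The augmented matrix `V̄ = (E_k | V)`: the first `k` columns form the tropical
identity matrix (`0` on the diagonal, `∞` off the diagonal), the remaining columns are `V`. -/
noncomputable def augmented {k n : ℕ} (V : Matrix (Fin k) (Fin (n - k)) ℝ) :
    Matrix (Fin k) (Fin n) (WithTop ℝ) := fun i j =>
  if h : (j : ℕ) < k then (if (i : ℕ) = (j : ℕ) then (0 : WithTop ℝ) else ⊤)
  else V i ⟨(j : ℕ) - k, by have := j.isLt; omega⟩

/-- `τ_V(σ) = tdet(V̄_σ)`, the tropical determinant of the `k × k` submatrix of the
augmented matrix with columns indexed by the `k`-subset `σ` of `[n]`. -/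
noncomputable def tau {k n : ℕ} (V : Matrix (Fin k) (Fin (n - k)) ℝ)
    (σ : Finset (Fin n)) : WithTop ℝ :=
  if h : σ.card = k then tdet (fun i l => augmented V i (σ.orderIsoOfFin h l)) else ⊤

/-- The `k`-subset `([k] \ {i}) ∪ {j + k}` of `[n]`. -/
def sigmaIJ (k n : ℕ) (i : Fin k) (j : Fin (n - k)) : Finset (Fin n) :=
  insert ⟨k + (j : ℕ), by have := j.isLt; omega⟩
    ((Finset.univ.filter fun t : Fin n => (t : ℕ) < k).erase
      ⟨(i : ℕ), by have := i.isLt; have := j.isLt; omega⟩)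

/-- `Φ(π)` is the `k × (n-k)` matrix with `(i,j)` entry `π(([k] \ {i}) ∪ {j + k})`. -/
noncomputable def Phi {k n : ℕ} (π : Finset (Fin n) → WithTop ℝ) :
    Matrix (Fin k) (Fin (n - k)) (WithTop ℝ) := fun i j => π (sigmaIJ k n i j)

-- auxiliary development

def fIJ (k n : ℕ) (hkn : k < n) (i : Fin k) (j : Fin (n - k)) (l : Fin k) : Fin n :=
  if (l : ℕ) = (i : ℕ) then ⟨k + (j : ℕ), by have := j.isLt; omega⟩
  else ⟨(l : ℕ), by have := l.isLt; omega⟩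

lemma fIJ_injective (k n : ℕ) (hkn : k < n) (i : Fin k) (j : Fin (n - k)) :
    Function.Injective (fIJ k n hkn i j) := by
  intro a b hab
  unfold fIJ at hab
  have ha := a.isLt
  have hb := b.isLt
  split_ifs at hab with h1 h2 h2 <;>
    (apply Fin.ext; simp only [Fin.mk.injEq] at hab; omega)

lemma mem_sigmaIJ {k n : ℕ} (i : Fin k) (j : Fin (n - k)) (t : Fin n) :
    t ∈ sigmaIJ k n i j ↔ ((t : ℕ) = k + (j : ℕ) ∨ ((t : ℕ) < k ∧ (t : ℕ) ≠ (i : ℕ))) := by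
  unfold sigmaIJ
  simp [Finset.mem_insert, Finset.mem_erase, Finset.mem_filter, Fin.ext_iff]
  tauto

lemma sigmaIJ_eq_image (k n : ℕ) (hkn : k < n) (i : Fin k) (j : Fin (n - k)) :
    sigmaIJ k n i j = Finset.image (fIJ k n hkn i j) Finset.univ := by
  ext t
  rw [mem_sigmaIJ]
  simp only [Finset.mem_image, Finset.mem_univ, true_and]
  constructor
  · rintro (h | ⟨h1, h2⟩)
    · exact ⟨i, by simp [fIJ, Fin.ext_iff, h.symm]⟩
    · exact ⟨⟨(t : ℕ), h1⟩, by simp [fIJ, Fin.ext_iff, h2]⟩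
  · rintro ⟨l, rfl⟩
    unfold fIJ
    split_ifs with h
    · left; rfl
    · right; exact ⟨l.isLt, h⟩

lemma sigmaIJ_card (k n : ℕ) (hkn : k < n) (i : Fin k) (j : Fin (n - k)) :
    (sigmaIJ k n i j).card = k := by
  rw [sigmaIJ_eq_image k n hkn i j,
    Finset.card_image_of_injective _ (fIJ_injective k n hkn i j)]
  simp

lemma tdet_comp_equiv {k : ℕ} (A : Matrix (Fin k) (Fin k) (WithTop ℝ))
    (g : Equiv.Perm (Fin k)) :
    tdet (fun r l => A r (g l)) = tdet A := by
  unfold tdet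
  apply le_antisymm
  · apply Finset.le_inf
    intro ω _
    refine le_trans (Finset.inf_le (Finset.mem_univ (g⁻¹ * ω))) (le_of_eq ?_)
    simp [Equiv.Perm.mul_apply]
  · apply Finset.le_inf
    intro ω _
    refine le_trans (Finset.inf_le (Finset.mem_univ (g * ω))) (le_of_eq ?_)
    simp [Equiv.Perm.mul_apply]

lemma tdet_fIJ (k n : ℕ) (hkn : k < n) (V : Matrix (Fin k) (Fin (n - k)) ℝ)
    (i : Fin k) (j : Fin (n - k)) :
    tdet (fun r l => augmented V r (fIJ k n hkn i j l)) = ((V i j : ℝ) : WithTop ℝ) := by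
  have hB : ∀ r l : Fin k, augmented V r (fIJ k n hkn i j l) =
      if (l : ℕ) = (i : ℕ) then ((V r j : ℝ) : WithTop ℝ)
      else (if (r : ℕ) = (l : ℕ) then (0 : WithTop ℝ) else ⊤) := by
    intro r l
    unfold fIJ augmented
    by_cases h1 : (l : ℕ) = (i : ℕ)
    · rw [if_pos h1, if_pos h1, dif_neg (by simp)]
      congr 1
      congr 1
      apply Fin.ext
      simp
    · rw [if_neg h1, if_neg h1, dif_pos (by simp)]
  have hid : ∀ ω : Equiv.Perm (Fin k), ω = 1 →
      (∑ r, augmented V r (fIJ k n hkn i j (ω r))) = ((V i j : ℝ) : WithTop ℝ) := by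
    rintro _ rfl
    have : ∀ r : Fin k, augmented V r (fIJ k n hkn i j r) =
        if r = i then ((V i j : ℝ) : WithTop ℝ) else 0 := by
      intro r
      rw [hB r r]
      by_cases h : r = i
      · subst h; simp
      · have : (r : ℕ) ≠ (i : ℕ) := fun hc => h (Fin.ext hc)
        simp [this, h]
    simp only [Equiv.Perm.one_apply, this]
    simp
  have htop : ∀ ω : Equiv.Perm (Fin k), ω ≠ 1 →
      (∑ r, augmented V r (fIJ k n hkn i j (ω r))) = ⊤ := by
    intro ω hω
    have : ∃ r : Fin k, augmented V r (fIJ k n hkn i j (ω r)) = ⊤ := by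
      have : ∃ s, ω s ≠ s := by
        by_contra hc
        push_neg at hc
        exact hω (Equiv.ext fun s => hc s)
      obtain ⟨s, hs⟩ := this
      by_cases hsi : (ω s : ℕ) = (i : ℕ)
      · -- ω s = i, s ≠ i, so ω i ≠ i
        have hsi' : ω s = i := Fin.ext hsi
        have hsne : s ≠ i := by rintro rfl; exact hs hsi'
        have hωi : ω i ≠ i := by
          intro hc
          exact hsne (ω.injective (by rw [hsi', hc]))
        refine ⟨i, ?_⟩
        rw [hB]
        have h1 : ((ω i : Fin k) : ℕ) ≠ (i : ℕ) := fun hc => hωi (Fin.ext hc)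
        have h2 : (i : ℕ) ≠ ((ω i : Fin k) : ℕ) := fun hc => h1 hc.symm
        simp [h1, h2]
      · refine ⟨s, ?_⟩
        rw [hB]
        have h2 : (s : ℕ) ≠ ((ω s : Fin k) : ℕ) := by
          intro hc
          exact hs (Fin.ext hc.symm)
        simp [hsi, h2]
    obtain ⟨r, hr⟩ := this
    rw [← Finset.add_sum_erase _ _ (Finset.mem_univ r), hr, top_add]
  unfold tdet
  apply le_antisymm
  · exact le_trans (Finset.inf_le (Finset.mem_univ 1)) (le_of_eq (hid 1 rfl))
  · apply Finset.le_inf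
    intro ω _
    by_cases h : ω = 1
    · exact le_of_eq (hid ω h).symm
    · rw [htop ω h]; exact le_top

lemma orderIso_eq_fIJ (k n : ℕ) (hkn : k < n) (i : Fin k) (j : Fin (n - k)) :
    ∃ g : Equiv.Perm (Fin k), ∀ l,
      ((sigmaIJ k n i j).orderIsoOfFin (sigmaIJ_card k n hkn i j) l : Fin n) =
        fIJ k n hkn i j (g l) := by
  have hmem : ∀ l, fIJ k n hkn i j l ∈ sigmaIJ k n i j := fun l => by
    rw [sigmaIJ_eq_image k n hkn i j]
    exact Finset.mem_image_of_mem _ (Finset.mem_univ l)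
  let f' : Fin k → {x // x ∈ sigmaIJ k n i j} := fun l => ⟨fIJ k n hkn i j l, hmem l⟩
  have hinj : Function.Injective f' := fun a b hab =>
    fIJ_injective k n hkn i j (Subtype.ext_iff.mp hab)
  have hcard : Fintype.card {x // x ∈ sigmaIJ k n i j} = k := by
    rw [Fintype.card_coe, sigmaIJ_card k n hkn i j]
  have hbij : Function.Bijective f' := by
    rw [Fintype.bijective_iff_injective_and_card]
    exact ⟨hinj, by simp [hcard]⟩
  let e2 := Equiv.ofBijective f' hbij
  let e1 := ((sigmaIJ k n i j).orderIsoOfFin (sigmaIJ_card k n hkn i j)).toEquiv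
  refine ⟨e1.trans e2.symm, fun l => ?_⟩
  have h1 : e2 ((e1.trans e2.symm) l) = e1 l := by simp
  have h2 := congrArg Subtype.val h1
  exact h2.symm


/-- For an arbitrary matrix `V ∈ ℝ^{k×(n-k)}`, `Φ(τ_V) = V`; in particular `τ` is injective. -/
theorem phi_tau_eq_self_and_tau_injective (k n : ℕ) (hk : 0 < k) (hkn : k < n) :
    (∀ V : Matrix (Fin k) (Fin (n - k)) ℝ,
      Phi (tau V) = fun i j => ((V i j : ℝ) : WithTop ℝ)) ∧
    Function.Injective (fun V : Matrix (Fin k) (Fin (n - k)) ℝ => tau V) := by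
  have hmain : ∀ V : Matrix (Fin k) (Fin (n - k)) ℝ,
      Phi (tau V) = fun i j => ((V i j : ℝ) : WithTop ℝ) := by
    intro V
    funext i j
    show tau V (sigmaIJ k n i j) = _
    unfold tau
    rw [dif_pos (sigmaIJ_card k n hkn i j)]
    obtain ⟨g, hg⟩ := orderIso_eq_fIJ k n hkn i j
    have heq : (fun r l => augmented V r
          ((sigmaIJ k n i j).orderIsoOfFin (sigmaIJ_card k n hkn i j) l))
        = fun r l => augmented V r (fIJ k n hkn i j (g l)) := by
      funext r l; rw [hg l]
    rw [heq, tdet_comp_equiv (fun r l => augmented V r (fIJ k n hkn i j l)) g,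
      tdet_fIJ k n hkn V i j]
  refine ⟨hmain, ?_⟩
  intro V W h
  have h2 : (Phi (tau V) : Matrix (Fin k) (Fin (n - k)) (WithTop ℝ)) = Phi (tau W) := by
    rw [show tau V = tau W from h]
  rw [hmain V, hmain W] at h2
  funext i j
  have h3 := congrFun (congrFun h2 i) j
  exact_mod_cast h3
end

section
/- For every matrix V ∈ ℝ^{k×(n-k)}, the vector τ_V is a finite tropical Plücker vector: for every (k−2)-subset ρ of [n] and pairwise distinct i,j,ℓ,m ∈ [n]∖ρ, the minimum of the three numbers τ_V(ρij)+τ_V(ρℓm), τ_V(ρiℓ)+τ_V(ρjm), τ_V(ρim)+τ_V(ρjℓ) is attained at least twice. -/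
open scoped Classical

/-!
`τ_V(σ)` is the minimum weight of a perfect matching between the rows of `V̄` and the columns
`σ`. Given optimal matchings for `ρij` and `ρℓm`, follow the alternating path of the two matchings
that starts at column `i`; it ends at a column `e ∈ {ℓ, m}`, and swapping the two matchings along
it yields matchings for `ρje` and `ρi(ℓm∖e)` of the same total weight. Hence
`min(τ(ρiℓ) + τ(ρjm), τ(ρim) + τ(ρjℓ)) ≤ τ(ρij) + τ(ρℓm)`, and the three instances of this
inequality force the minimum to be attained twice. Finiteness holds because every `k`-set of
columns can be matched using only diagonal zeros of `E_k` and entries of `V`.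
-/

open Finset

theorem min_attained_twice_of_le_min {α : Type*} [LinearOrder α] {a b c : α}
    (ha : min b c ≤ a) (hb : min a c ≤ b) (hc : min a b ≤ c) :
    (a = b ∧ a ≤ c) ∨ (a = c ∧ a ≤ b) ∨ (b = c ∧ b ≤ a) := by
  grind

namespace Finset

variable {ι α : Type*} [DecidableEq ι] [DecidableEq α] {f g : ι → α} {R : Finset ι}

theorem image_erase_of_injOn (hf : Set.InjOn f R) {r : ι} (hr : r ∈ R) :
    (R.erase r).image f = (R.image f).erase (f r) := by
  ext y
  simp only [mem_image, mem_erase]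
  constructor
  · rintro ⟨x, ⟨hxr, hx⟩, rfl⟩
    exact ⟨fun h => hxr (hf hx hr h), x, hx, rfl⟩
  · rintro ⟨hy, x, hx, rfl⟩
    exact ⟨x, ⟨fun h => hy (h ▸ rfl), hx⟩, rfl⟩

theorem image_insert_piecewise {S : Finset ι} {r : ι} (hr : r ∈ R) :
    R.image ((insert r S).piecewise f g) =
      insert (f r) ((R.erase r).image (S.piecewise f g)) := by
  conv_lhs => rw [← insert_erase hr]
  rw [image_insert, piecewise_insert_self]
  congr 1
  exact image_congr fun x hx => piecewise_insert_of_ne _ _ _ (ne_of_mem_erase hx)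

/-- Follow the alternating path `i = P r₀`, `Q r₀ = P r₁`, `Q r₁ = P r₂`, … until it leaves the
image of `P` at `e`; swapping `P` and `Q` on the rows `S` of the path exchanges `i` and `e`. -/
theorem exists_exchange_piecewise {P Q : ι → α} (hP : Set.InjOn P R) (hQ : Set.InjOn Q R)
    {i : α} (hiP : i ∈ R.image P) (hiQ : i ∉ R.image Q) :
    ∃ S : Finset ι, ∃ e ∈ R.image Q, e ∉ R.image P ∧
      R.image (S.piecewise Q P) = insert e ((R.image P).erase i) ∧
      R.image (S.piecewise P Q) = insert i ((R.image Q).erase e) := by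
  induction R using Finset.strongInduction generalizing i with
  | H R ih =>
  obtain ⟨r, hr, rfl⟩ := mem_image.mp hiP
  have hPr := image_erase_of_injOn hP hr
  have hQr := image_erase_of_injOn hQ hr
  have hQR : Q r ∈ R.image Q := mem_image_of_mem Q hr
  by_cases hx : Q r ∈ R.image P
  · have hxP : Q r ∈ (R.erase r).image P := by
      rw [hPr]
      exact mem_erase.mpr ⟨fun h => hiQ (h ▸ hQR), hx⟩
    have hxQ : Q r ∉ (R.erase r).image Q := by simp [hQr]
    obtain ⟨S, e, he, heP, himP, himQ⟩ :=
      ih _ (erase_ssubset hr) (hP.mono (by simp)) (hQ.mono (by simp)) hxP hxQ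
    have heR : e ∈ R.image Q := image_subset_image (erase_subset r R) he
    have heP' : e ∉ R.image P := by
      have hne : e ≠ P r := fun h => hiQ (h ▸ heR)
      exact fun h => heP (hPr ▸ mem_erase.mpr ⟨hne, h⟩)
    have hxe : Q r ≠ e := fun h => heP (h ▸ hxP)
    refine ⟨insert r S, e, heR, heP', ?_, ?_⟩
    · rw [image_insert_piecewise hr, himP, ← hPr, insert_comm, insert_erase hxP]
    · rw [image_insert_piecewise hr, himQ, ← insert_erase hQR, ← hQr, erase_insert_of_ne hxe]
  · refine ⟨{r}, Q r, hQR, hx, ?_, ?_⟩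
    · rw [← insert_empty_eq, image_insert_piecewise hr, piecewise_empty, hPr]
    · rw [← insert_empty_eq, image_insert_piecewise hr, piecewise_empty, hQr]

end Finset

theorem injective_of_image_univ_eq {k : ℕ} {β : Type*} [DecidableEq β] {σ : Finset β}
    (hσ : σ.card = k) {f : Fin k → β} (hf : univ.image f = σ) : Function.Injective f := by
  rw [← Set.injOn_univ, ← coe_univ, ← card_image_iff, hf, hσ, card_univ, Fintype.card_fin]

section TropicalMinor

variable {k : ℕ} {β : Type*} [LinearOrder β]

noncomputable def tropicalMinor (A : Matrix (Fin k) β (WithTop ℝ)) (σ : Finset β) : WithTop ℝ :=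
  if h : σ.card = k then tdet (fun i l => A i (σ.orderIsoOfFin h l)) else ⊤

variable {A : Matrix (Fin k) β (WithTop ℝ)}

theorem tropicalMinor_le_sum {σ : Finset β} (hσ : σ.card = k) {f : Fin k → β}
    (hf : univ.image f = σ) : tropicalMinor A σ ≤ ∑ r, A r (f r) := by
  have hfσ (r : Fin k) : f r ∈ σ := hf ▸ mem_image_of_mem f (mem_univ r)
  have hinj := injective_of_image_univ_eq hσ hf
  let ω : Equiv.Perm (Fin k) :=
    Equiv.ofBijective (fun r => (σ.orderIsoOfFin hσ).symm ⟨f r, hfσ r⟩)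
      (Finite.injective_iff_bijective.mp fun a b hab => hinj (by simpa using hab))
  rw [tropicalMinor, dif_pos hσ]
  refine (inf_le (mem_univ ω)).trans_eq (sum_congr rfl fun r _ => ?_)
  simp [ω]

theorem exists_sum_eq_tropicalMinor {σ : Finset β} (hσ : σ.card = k) :
    ∃ f : Fin k → β, univ.image f = σ ∧ tropicalMinor A σ = ∑ r, A r (f r) := by
  let e := σ.orderIsoOfFin hσ
  obtain ⟨ω, -, hω⟩ := exists_mem_eq_inf univ univ_nonempty
    fun ω : Equiv.Perm (Fin k) => ∑ i, A i (e (ω i))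
  refine ⟨fun r => e (ω r), ?_, by rw [tropicalMinor, dif_pos hσ]; exact hω⟩
  ext x
  simp only [mem_image, mem_univ, true_and]
  exact ⟨fun ⟨r, hr⟩ => hr ▸ coe_mem _, fun hx => ⟨ω.symm (e.symm ⟨x, hx⟩), by simp⟩⟩

/-- The exchange axiom of valuated matroids. -/
theorem tropicalMinor_exchange {σ τ : Finset β} (hσ : σ.card = k) (hτ : τ.card = k) {i : β}
    (hiσ : i ∈ σ) (hiτ : i ∉ τ) :
    ∃ e ∈ τ, e ∉ σ ∧
      tropicalMinor A (insert e (σ.erase i)) + tropicalMinor A (insert i (τ.erase e)) ≤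
        tropicalMinor A σ + tropicalMinor A τ := by
  obtain ⟨P, hPσ, hP⟩ := exists_sum_eq_tropicalMinor (A := A) hσ
  obtain ⟨Q, hQτ, hQ⟩ := exists_sum_eq_tropicalMinor (A := A) hτ
  obtain ⟨S, e, heτ, heσ, hP', hQ'⟩ := exists_exchange_piecewise
    (injective_of_image_univ_eq hσ hPσ).injOn (injective_of_image_univ_eq hτ hQτ).injOn
    (hPσ ▸ hiσ) (hQτ ▸ hiτ)
  simp only [hPσ, hQτ] at heτ heσ hP' hQ'
  have hk : 0 < k := hσ ▸ card_pos.mpr ⟨i, hiσ⟩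
  have hσ' : (insert e (σ.erase i)).card = k := by
    rw [card_insert_of_notMem fun h => heσ (mem_of_mem_erase h), card_erase_of_mem hiσ]
    omega
  have hτ' : (insert i (τ.erase e)).card = k := by
    rw [card_insert_of_notMem fun h => hiτ (mem_of_mem_erase h), card_erase_of_mem heτ]
    omega
  refine ⟨e, heτ, heσ, ?_⟩
  calc _ ≤ (∑ r, A r (S.piecewise Q P r)) + ∑ r, A r (S.piecewise P Q r) :=
        add_le_add (tropicalMinor_le_sum hσ' hP') (tropicalMinor_le_sum hτ' hQ')
    _ = (∑ r, A r (P r)) + ∑ r, A r (Q r) := by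
        rw [← sum_add_distrib, ← sum_add_distrib]
        refine sum_congr rfl fun r _ => ?_
        by_cases hr : r ∈ S <;> simp [hr, add_comm]
    _ = tropicalMinor A σ + tropicalMinor A τ := by rw [hP, hQ]

theorem tropicalMinor_three_term_le (hk : 2 ≤ k) {ρ : Finset β} (hρ : ρ.card = k - 2)
    {i j l m : β} (hi : i ∉ ρ) (hj : j ∉ ρ) (hl : l ∉ ρ) (hm : m ∉ ρ)
    (hij : i ≠ j) (hil : i ≠ l) (him : i ≠ m) (hlm : l ≠ m) :
    min (tropicalMinor A (insert i (insert l ρ)) + tropicalMinor A (insert j (insert m ρ)))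
        (tropicalMinor A (insert i (insert m ρ)) + tropicalMinor A (insert j (insert l ρ))) ≤
      tropicalMinor A (insert i (insert j ρ)) + tropicalMinor A (insert l (insert m ρ)) := by
  have hcard {x y : β} (hx : x ∉ ρ) (hy : y ∉ ρ) (hxy : x ≠ y) :
      (insert x (insert y ρ)).card = k := by
    rw [card_insert_of_notMem (by simp [hxy, hx]), card_insert_of_notMem hy]
    omega
  obtain ⟨e, he, heσ, hle⟩ := tropicalMinor_exchange (A := A) (hcard hi hj hij)
    (hcard hl hm hlm) (mem_insert_self i _) (by simp [hil, him, hi])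
  rw [erase_insert (by simp [hij, hi])] at hle
  rcases mem_insert.mp he with rfl | he
  · rw [erase_insert (by simp [hlm, hl]), insert_comm] at hle
    exact (min_le_right _ _).trans (by rwa [add_comm] at hle)
  obtain rfl : e = m := by simpa [show e ∉ ρ from fun h => heσ (by simp [h])] using he
  rw [erase_insert_of_ne hlm, erase_insert hm, insert_comm] at hle
  exact (min_le_left _ _).trans (by rwa [add_comm] at hle)

theorem tropicalMinor_pluecker (hk : 2 ≤ k) (A : Matrix (Fin k) β (WithTop ℝ)) :
    ∀ (ρ : Finset β) (i j l m : β), ρ.card = k - 2 →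
      i ∉ ρ → j ∉ ρ → l ∉ ρ → m ∉ ρ →
      i ≠ j → i ≠ l → i ≠ m → j ≠ l → j ≠ m → l ≠ m →
      (let a := tropicalMinor A (insert i (insert j ρ)) + tropicalMinor A (insert l (insert m ρ))
       let b := tropicalMinor A (insert i (insert l ρ)) + tropicalMinor A (insert j (insert m ρ))
       let c := tropicalMinor A (insert i (insert m ρ)) + tropicalMinor A (insert j (insert l ρ))
       (a = b ∧ a ≤ c) ∨ (a = c ∧ a ≤ b) ∨ (b = c ∧ b ≤ a)) := by
  intro ρ i j l m hρ hi hj hl hm hij hil him hjl hjm hlm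
  refine min_attained_twice_of_le_min
    (tropicalMinor_three_term_le hk hρ hi hj hl hm hij hil him hlm) ?_ ?_
  · have := tropicalMinor_three_term_le (A := A) hk hρ hi hl hj hm hil hij him hjm
    rwa [insert_comm l j ρ] at this
  · have := tropicalMinor_three_term_le (A := A) hk hρ hi hm hj hl him hij hil hjl
    rwa [insert_comm m l ρ, insert_comm m j ρ] at this

end TropicalMinor

section Augmented

variable {k n : ℕ}

theorem tau_eq_tropicalMinor (V : Matrix (Fin k) (Fin (n - k)) ℝ) :
    tau V = tropicalMinor (augmented V) :=
  rfl

theorem augmented_ne_top (V : Matrix (Fin k) (Fin (n - k)) ℝ) {r : Fin k} {c : Fin n}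
    (hc : (c : ℕ) = r ∨ k ≤ c) : augmented V r c ≠ ⊤ := by
  unfold augmented
  split_ifs <;> first | exact WithTop.coe_ne_top | omega

/-- Rows `r` with column `r` in `σ` use the diagonal zero; the remaining rows are matched
bijectively with the columns of `σ` lying in the `V`-block. -/
theorem exists_image_eq_and_val_eq_or_le {σ : Finset (Fin n)} (hσ : σ.card = k) :
    ∃ f : Fin k → Fin n, univ.image f = σ ∧ ∀ r, (f r : ℕ) = r ∨ k ≤ f r := by
  have hkn : k ≤ n := hσ ▸ (card_le_univ σ).trans_eq (Fintype.card_fin n)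
  have hdiag : #(univ.filter fun r : Fin k => Fin.castLE hkn r ∈ σ) =
      #(σ.filter fun c : Fin n => ¬k ≤ (c : ℕ)) := by
    refine card_bij (fun r _ => Fin.castLE hkn r) (fun r hr => by simpa using hr)
      (fun r _ r' _ h => Fin.castLE_injective hkn h) (fun c hc => ?_)
    simp only [mem_filter, not_le] at hc
    exact ⟨⟨c, hc.2⟩, by simpa using hc.1, rfl⟩
  have hrest : #(univ.filter fun r : Fin k => Fin.castLE hkn r ∉ σ) =
      #(σ.filter fun c : Fin n => k ≤ (c : ℕ)) := by
    have hr := card_filter_add_card_filter_not (s := univ) fun r : Fin k => Fin.castLE hkn r ∈ σ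
    have hc := card_filter_add_card_filter_not (s := σ) fun c : Fin n => k ≤ (c : ℕ)
    simp only [card_univ, Fintype.card_fin] at hr
    omega
  let g := equivOfCardEq hrest
  let f r := if h : Fin.castLE hkn r ∈ σ then Fin.castLE hkn r else (g ⟨r, by simpa using h⟩).1
  have hfσ (r : Fin k) : f r ∈ σ := by
    by_cases h : Fin.castLE hkn r ∈ σ
    · simpa only [f, dif_pos h]
    · simp only [f, dif_neg h]
      exact (mem_filter.mp (g _).2).1
  have hσf : σ ⊆ univ.image f := by
    intro c hc
    rw [mem_image]
    by_cases hck : k ≤ (c : ℕ)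
    · let r := g.symm ⟨c, mem_filter.mpr ⟨hc, hck⟩⟩
      have hr : Fin.castLE hkn r.1 ∉ σ := (mem_filter.mp r.2).2
      exact ⟨r.1, mem_univ _,
        by simp only [f, dif_neg hr, r, Subtype.coe_eta, Equiv.apply_symm_apply]⟩
    · have hr : Fin.castLE hkn ⟨c, by omega⟩ = c := rfl
      exact ⟨⟨c, by omega⟩, mem_univ _, by simp only [f, hr, dif_pos hc]⟩
  refine ⟨f, Subset.antisymm (image_subset_iff.mpr fun r _ => hfσ r) hσf, fun r => ?_⟩
  by_cases h : Fin.castLE hkn r ∈ σ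
  · simp only [f, dif_pos h, Fin.val_castLE, true_or]
  · simp only [f, dif_neg h]
    exact Or.inr (mem_filter.mp (g _).2).2

theorem tau_ne_top (V : Matrix (Fin k) (Fin (n - k)) ℝ) {σ : Finset (Fin n)}
    (hσ : σ.card = k) : tau V σ ≠ ⊤ := by
  obtain ⟨f, hf, hfin⟩ := exists_image_eq_and_val_eq_or_le hσ
  rw [tau_eq_tropicalMinor]
  exact ne_top_of_le_ne_top (WithTop.sum_ne_top.mpr fun r _ => augmented_ne_top V (hfin r))
    (tropicalMinor_le_sum hσ hf)

end Augmented

theorem tau_is_tropical_pluecker_general (k n : ℕ) (hk : 2 ≤ k)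
    (V : Matrix (Fin k) (Fin (n - k)) ℝ) :
    (∀ σ : Finset (Fin n), σ.card = k → tau V σ ≠ ⊤) ∧
    ∀ (ρ : Finset (Fin n)) (i j l m : Fin n), ρ.card = k - 2 →
      i ∉ ρ → j ∉ ρ → l ∉ ρ → m ∉ ρ →
      i ≠ j → i ≠ l → i ≠ m → j ≠ l → j ≠ m → l ≠ m →
      (let a := tau V (insert i (insert j ρ)) + tau V (insert l (insert m ρ))
       let b := tau V (insert i (insert l ρ)) + tau V (insert j (insert m ρ))
       let c := tau V (insert i (insert m ρ)) + tau V (insert j (insert l ρ))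
       (a = b ∧ a ≤ c) ∨ (a = c ∧ a ≤ b) ∨ (b = c ∧ b ≤ a)) :=
  ⟨fun _ => tau_ne_top V, tau_eq_tropicalMinor V ▸ tropicalMinor_pluecker hk (augmented V)⟩

/-- For every `V ∈ ℝ^{k×(n-k)}`, `τ_V` is a finite tropical Plücker vector: its values
are finite, and for every `(k-2)`-subset `ρ` of `[n]` and pairwise distinct
`i, j, ℓ, m ∉ ρ`, the minimum of `τ_V(ρij)+τ_V(ρℓm)`, `τ_V(ρiℓ)+τ_V(ρjm)`,
`τ_V(ρim)+τ_V(ρjℓ)` is attained at least twice. -/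
theorem tau_is_tropical_pluecker (k n : ℕ) (hk : 2 ≤ k) (hkn : k < n)
    (V : Matrix (Fin k) (Fin (n - k)) ℝ) :
    (∀ σ : Finset (Fin n), σ.card = k → tau V σ ≠ ⊤) ∧
    ∀ (ρ : Finset (Fin n)) (i j l m : Fin n), ρ.card = k - 2 →
      i ∉ ρ → j ∉ ρ → l ∉ ρ → m ∉ ρ →
      i ≠ j → i ≠ l → i ≠ m → j ≠ l → j ≠ m → l ≠ m →
      (let a := tau V (insert i (insert j ρ)) + tau V (insert l (insert m ρ))
       let b := tau V (insert i (insert l ρ)) + tau V (insert j (insert m ρ))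
       let c := tau V (insert i (insert m ρ)) + tau V (insert j (insert l ρ))
       (a = b ∧ a ≤ c) ∨ (a = c ∧ a ≤ b) ∨ (b = c ∧ b ≤ a)) :=
  tau_is_tropical_pluecker_general k n hk V
end

section
/- The dimension of the matroid polytope of a matroid M on n elements equals n − c(M), where c(M) is the number of connected components of M. -/
open scoped Classical

/-- A circuit of a matroid: a minimal dependent set. -/
def Matroid.IsCircuit' {α : Type*} (M : Matroid α) (C : Set α) : Prop :=
  M.Dep C ∧ ∀ D, D ⊂ C → ¬ M.Dep D

/-- Two elements are related if they are equal or lie on a common circuit; the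
equivalence classes of this relation are the connected components of the matroid. -/
def Matroid.ComponentRel {α : Type*} (M : Matroid α) (i j : α) : Prop :=
  i = j ∨ ∃ C, M.IsCircuit' C ∧ i ∈ C ∧ j ∈ C

/-- The number of connected components `c(M)` of a matroid. -/
noncomputable def Matroid.numComponents {α : Type*} (M : Matroid α) : ℕ :=
  Nat.card (Quot M.ComponentRel)

/-- The 0/1 indicator vector `e_σ` of a set of elements of `[n]`. -/
noncomputable def indicatorVec {n : ℕ} (B : Set (Fin n)) : Fin n → ℝ :=
  fun i => if i ∈ B then 1 else 0

/-- The matroid polytope: the convex hull of the indicator vectors of the bases. -/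
noncomputable def matroidPolytope {n : ℕ} (M : Matroid (Fin n)) : Set (Fin n → ℝ) :=
  convexHull ℝ {x | ∃ B, M.IsBase B ∧ x = indicatorVec B}

/-! The vertices of the matroid polytope are the indicator vectors `e_B` of the bases, so its
direction space is spanned by the differences `e_B - e_B'`. By basis exchange each such difference
is a sum of vectors `e_e - e_f` where `B - e + f` is again a base, and then `e` and `f` lie on the
fundamental circuit of `f` with respect to `B`. Conversely, for `i ≠ j` on a circuit `C`, extending
`C - i` to a base `B` makes `B - j + i` a base. So the direction space is spanned by the `e_i - e_j`
with `i, j` in a common component: it is the kernel of the surjective map `ℝⁿ → ℝ^c(M)` summing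
the coordinates over each component, and has dimension `n - c(M)`. -/

open Set Submodule

namespace Matroid

variable {α : Type*} {M : Matroid α} {B C : Set α} {e f : α}

theorem isCircuit'_iff_isCircuit : M.IsCircuit' C ↔ M.IsCircuit C := by
  rw [isCircuit_iff_forall_ssubset, IsCircuit']
  refine and_congr_right fun hC => forall_congr' fun D => imp_congr_right fun hDC => ?_
  rw [not_dep_iff (hDC.subset.trans hC.subset_ground)]

theorem IsBase.exchange_isBase_iff_mem_fundCircuit (hB : M.IsBase B) (he : e ∈ B)
    (hfE : f ∈ M.E) (hf : f ∉ B) :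
    M.IsBase (insert f B \ {e}) ↔ e ∈ M.fundCircuit f B := by
  rw [hB.indep.mem_fundCircuit_iff (by rwa [hB.closure_eq]) hf]
  exact ⟨IsBase.indep, hB.exchange_isBase_of_indep' he hf⟩

theorem IsBase.componentRel_of_exchange (hB : M.IsBase B) (he : e ∈ B) (hfE : f ∈ M.E)
    (hf : f ∉ B) (hB' : M.IsBase (insert f B \ {e})) : M.ComponentRel e f :=
  .inr ⟨M.fundCircuit f B, isCircuit'_iff_isCircuit.mpr (hB.fundCircuit_isCircuit hfE hf),
    (hB.exchange_isBase_iff_mem_fundCircuit he hfE hf).mp hB', M.mem_fundCircuit f B⟩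

theorem IsCircuit.exists_isBase_exchange (hC : M.IsCircuit C) (he : e ∈ C) (hf : f ∈ C)
    (hef : e ≠ f) : ∃ B, M.IsBase B ∧ e ∈ B ∧ f ∉ B ∧ M.IsBase (insert f B \ {e}) := by
  obtain ⟨B, hB, hCB⟩ := (hC.sdiff_singleton_indep hf).exists_isBase_superset
  have hCfB : C ⊆ insert f B := sdiff_singleton_subset_iff.mp hCB
  have hfB : f ∉ B := fun hfB => hC.not_indep (hB.indep.subset (insert_eq_of_mem hfB ▸ hCfB))
  refine ⟨B, hB, hCB ⟨he, hef⟩, hfB, ?_⟩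
  rw [hB.exchange_isBase_iff_mem_fundCircuit (hCB ⟨he, hef⟩) (hC.subset_ground hf) hfB,
    ← hC.eq_fundCircuit_of_subset hB.indep hCfB]
  exact he

end Matroid

section SingleDiffSpan

variable (K : Type*) {ι : Type*} [Field K] [DecidableEq ι] (r : ι → ι → Prop)

def singleDiffSpan : Submodule K (ι → K) :=
  span K {v | ∃ i j, r i j ∧ v = Pi.single i 1 - Pi.single j 1}

variable {K r} in
theorem single_sub_single_mem_singleDiffSpan {i j : ι} (h : Relation.EqvGen r i j) :
    Pi.single i 1 - Pi.single j 1 ∈ singleDiffSpan K r := by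
  induction h with
  | rel i j hij => exact subset_span ⟨i, j, hij, rfl⟩
  | refl i => simp
  | symm i j _ ih => simpa using neg_mem ih
  | trans i j k _ _ ihij ihjk => simpa using add_mem ihij ihjk

variable [Fintype ι]

noncomputable def classSum : (ι → K) →ₗ[K] (Quot r → K) :=
  Fintype.linearCombination K fun i => Pi.single (Quot.mk r i) 1

noncomputable def classRep : (Quot r → K) →ₗ[K] (ι → K) :=
  Finsupp.linearCombination K (fun c => Pi.single c.out 1) ∘ₗ
    (Finsupp.linearEquivFunOnFinite K K (Quot r)).symm.toLinearMap

variable {K r}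

theorem classSum_comp_classRep : classSum K r ∘ₗ classRep K r = LinearMap.id := by
  refine LinearMap.pi_ext fun c x => ?_
  simp [classSum, classRep, ← Pi.single_smul']

theorem sub_classRep_classSum_mem_singleDiffSpan (x : ι → K) :
    x - classRep K r (classSum K r x) ∈ singleDiffSpan K r := by
  let T : (ι → K) →ₗ[K] (ι → K) := LinearMap.id - classRep K r ∘ₗ classSum K r
  suffices ⊤ ≤ (singleDiffSpan K r).comap T from this mem_top
  rw [← (Pi.basisFun K ι).span_eq, span_le]
  rintro _ ⟨i, rfl⟩
  simpa [T, classSum, classRep] using single_sub_single_mem_singleDiffSpan (K := K)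
    (Quot.eqvGen_exact (Quot.out_eq (Quot.mk r i)).symm)

theorem ker_classSum : LinearMap.ker (classSum K r) = singleDiffSpan K r := by
  refine le_antisymm (fun x hx => ?_) (span_le.mpr ?_)
  · simpa [LinearMap.mem_ker.mp hx] using sub_classRep_classSum_mem_singleDiffSpan (r := r) x
  · rintro _ ⟨i, j, hij, rfl⟩
    simp [classSum, Quot.sound hij]

theorem finrank_singleDiffSpan :
    Module.finrank K (singleDiffSpan K r) = Fintype.card ι - Nat.card (Quot r) := by
  have := Fintype.ofFinite (Quot r)
  have hrange : LinearMap.range (classSum K r) = ⊤ :=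
    LinearMap.range_eq_top.mpr (LinearMap.surjective_of_comp_eq_id _ _ classSum_comp_classRep)
  have := LinearMap.finrank_range_add_finrank_ker (classSum K r)
  rw [hrange, finrank_top, ker_classSum, Module.finrank_fintype_fun_eq_card,
    Module.finrank_fintype_fun_eq_card] at this
  rw [Nat.card_eq_fintype_card]
  omega

end SingleDiffSpan

section MatroidPolytope

variable {n : ℕ} {M : Matroid (Fin n)}

theorem indicatorVec_sub_indicatorVec_exchange {B : Set (Fin n)} {e f : Fin n} (he : e ∈ B)
    (hf : f ∉ B) :
    indicatorVec B - indicatorVec (insert f B \ {e}) = Pi.single e 1 - Pi.single f 1 := by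
  have hef : e ≠ f := ne_of_mem_of_not_mem he hf
  ext k
  by_cases hke : k = e
  · subst hke; simp [indicatorVec, he, hef]
  by_cases hkf : k = f
  · subst hkf; simp [indicatorVec, hf, hef.symm]
  simp [indicatorVec, hke, hkf]

theorem indicatorVec_sub_mem_singleDiffSpan {B B' : Set (Fin n)} (hB : M.IsBase B)
    (hB' : M.IsBase B') :
    indicatorVec B - indicatorVec B' ∈ singleDiffSpan ℝ M.ComponentRel := by
  induction hk : (B \ B').ncard using Nat.strong_induction_on generalizing B with
  | _ k ih =>
  obtain hBB' | ⟨e, he⟩ := (B \ B').eq_empty_or_nonempty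
  · rw [hB.eq_of_subset_isBase hB' (sdiff_eq_empty.mp hBB'), sub_self]
    exact zero_mem _
  obtain ⟨f, hf, hBf⟩ := hB.exchange hB' he
  rw [insert_sdiff_singleton_comm (ne_of_mem_of_not_mem hf.1 he.2)] at hBf
  have hsub : (insert f B \ {e}) \ B' ⊆ (B \ B') \ {e} := by
    rintro x ⟨⟨rfl | hxB, hxe⟩, hxB'⟩
    · exact absurd hf.1 hxB'
    · exact ⟨⟨hxB, hxB'⟩, hxe⟩
  have hlt : ((insert f B \ {e}) \ B').ncard < k :=
    hk ▸ (ncard_le_ncard hsub).trans_lt (ncard_sdiff_singleton_lt_of_mem he)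
  rw [← sub_add_sub_cancel _ (indicatorVec (insert f B \ {e}))]
  refine add_mem ?_ (ih _ hlt hBf rfl)
  rw [indicatorVec_sub_indicatorVec_exchange he.1 hf.2]
  have hef : M.ComponentRel e f :=
    hB.componentRel_of_exchange he.1 (hB'.subset_ground hf.1) hf.2 hBf
  exact subset_span ⟨e, f, hef, rfl⟩

theorem vectorSpan_matroidPolytope :
    vectorSpan ℝ (matroidPolytope M) = singleDiffSpan ℝ M.ComponentRel := by
  rw [← direction_affineSpan, matroidPolytope, affineSpan_convexHull, direction_affineSpan]
  refine le_antisymm (span_le.mpr ?_) (span_le.mpr ?_)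
  · rintro _ ⟨_, ⟨B, hB, rfl⟩, _, ⟨B', hB', rfl⟩, rfl⟩
    exact indicatorVec_sub_mem_singleDiffSpan hB hB'
  · rintro _ ⟨i, j, rfl | ⟨C, hC, hi, hj⟩, rfl⟩
    · simp
    obtain rfl | hij := eq_or_ne i j
    · simp
    obtain ⟨B, hB, hiB, hjB, hB'⟩ :=
      (Matroid.isCircuit'_iff_isCircuit.mp hC).exists_isBase_exchange hi hj hij
    rw [← indicatorVec_sub_indicatorVec_exchange hiB hjB]
    exact vsub_mem_vectorSpan ℝ ⟨B, hB, rfl⟩ ⟨_, hB', rfl⟩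

end MatroidPolytope

theorem matroidPolytope_dim_general {n : ℕ} (M : Matroid (Fin n)) :
    Module.finrank ℝ (vectorSpan ℝ (matroidPolytope M)) = n - M.numComponents := by
  rw [vectorSpan_matroidPolytope, finrank_singleDiffSpan, Fintype.card_fin,
    Matroid.numComponents]

/-- The dimension of the matroid polytope of a matroid `M` on `n` elements equals
`n − c(M)`, where `c(M)` is the number of connected components of `M`. -/
theorem matroidPolytope_dim {n : ℕ} (M : Matroid (Fin n)) (hE : M.E = Set.univ) :
    Module.finrank ℝ (vectorSpan ℝ (matroidPolytope M)) = n - M.numComponents :=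
  matroidPolytope_dim_general M
end

section
/- Let C be a cell of a matroid subdivision of Δ(3,n) of codimension 2 (inside the (n−1)-dimensional hypersimplex) whose matroid M(C) is loop-free with three connected components α, β, γ partitioning [n]. Then the bases of M(C) are exactly the triples {i,j,ℓ} with i ∈ α, j ∈ β, ℓ ∈ γ; moreover every codimension-1 cell of the subdivision containing C lies in one of the three hyperplanes H_α = {x : Σ_{i∈α} x_i = 1}, H_β, H_γ, so C is contained in at most six codimension-1 cells. -/
open scoped Classical

section Subdivision

variable {E : Type*} [AddCommGroup E] [Module ℝ E]

/-- A polytope: the convex hull of a finite set of points. -/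
def IsPolytope (P : Set E) : Prop := ∃ s : Finset E, P = convexHull ℝ (s : Set E)

/-- `F` is a face of `C`: a convex extreme subset. -/
def IsFaceOf (F C : Set E) : Prop := IsExtreme ℝ C F ∧ Convex ℝ F

/-- A polytopal subdivision of a polytope `P`: a finite collection of nonempty polytopes
(cells), closed under taking (nonempty) faces, covering `P`, such that any two cells meet
in a common (possibly empty) face, and such that all vertices of cells are vertices of `P`. -/
structure IsSubdivision (P : Set E) (S : Set (Set E)) : Prop where
  finite : S.Finite
  nonempty_cell : ∀ C ∈ S, C.Nonempty
  poly : ∀ C ∈ S, IsPolytope C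
  face_closed : ∀ C ∈ S, ∀ F, IsFaceOf F C → F.Nonempty → F ∈ S
  cover : ⋃₀ S = P
  inter_face : ∀ C ∈ S, ∀ D ∈ S, IsFaceOf (C ∩ D) C
  vertices : ∀ C ∈ S, ∀ x ∈ Set.extremePoints ℝ C, x ∈ Set.extremePoints ℝ P

/-- A maximal cell of a collection of cells. -/
def MaximalCell (S : Set (Set E)) (C : Set E) : Prop :=
  C ∈ S ∧ ∀ D ∈ S, C ⊆ D → D = C

/-- The (relative) boundary of a polytope: the union of its proper faces. -/
def relBoundary (P : Set E) : Set E := ⋃₀ {F | IsFaceOf F P ∧ F ≠ P}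

/-- The restriction `Σ|_{P'} = {S ∩ P' : S ∈ Σ}` of a subdivision to a subpolytope. -/
def restrictSubdiv (S : Set (Set E)) (P' : Set E) : Set (Set E) := (fun C => C ∩ P') '' S

/-- `P'` is a subpolytope of `P`: the convex hull of a subset of the vertices of `P`. -/
def IsSubpolytope (P' P : Set E) : Prop :=
  ∃ W : Set E, W ⊆ Set.extremePoints ℝ P ∧ P' = convexHull ℝ W

/-- The tight-spans of `(P, S)` and `(P', S')` are isomorphic as posets: there is a
bijection between the interior cells (those not contained in the boundary) which is an
isomorphism for the partial order by reverse inclusion. -/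
def TightSpanIso (P : Set E) (S : Set (Set E)) (P' : Set E) (S' : Set (Set E)) : Prop :=
  ∃ e : {C : Set E // C ∈ S ∧ ¬ C ⊆ relBoundary P} ≃
        {C : Set E // C ∈ S' ∧ ¬ C ⊆ relBoundary P'},
    ∀ C D, C.1 ⊆ D.1 ↔ (e C).1 ⊆ (e D).1

/-- `S'` coarsens `S`: every cell of `S` is contained in some cell of `S'`. -/
def Coarsens (S S' : Set (Set E)) : Prop := ∀ C ∈ S, ∃ D ∈ S', C ⊆ D

/-- The trivial subdivision of a polytope: its collection of nonempty faces. -/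
def trivialSubdiv (P : Set E) : Set (Set E) := {F | IsFaceOf F P ∧ F.Nonempty}

/-- A coarsest (non-trivial) subdivision: a non-trivial subdivision whose only proper
coarsening is the trivial subdivision. -/
def IsCoarsest (P : Set E) (S : Set (Set E)) : Prop :=
  IsSubdivision P S ∧ S ≠ trivialSubdiv P ∧
    ∀ S', IsSubdivision P S' → Coarsens S S' → S' ≠ S → S' = trivialSubdiv P

end Subdivision

/-- The hypersimplex `Δ(k,n)`. -/
noncomputable def hypersimplex (k n : ℕ) : Set (Fin n → ℝ) :=
  convexHull ℝ {x | ∃ σ : Finset (Fin n), σ.card = k ∧ x = indicatorVec (↑σ : Set (Fin n))}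

/-- `C` is the matroid polytope of a rank-`k` matroid on `[n]`. -/
def IsMatroidPolytope (k n : ℕ) (C : Set (Fin n → ℝ)) : Prop :=
  ∃ M : Matroid (Fin n), M.E = Set.univ ∧ (∀ b, M.IsBase b → b.ncard = k) ∧
    C = convexHull ℝ {x | ∃ b, M.IsBase b ∧ x = indicatorVec b}

/-!
Every circuit of `M` lies inside one of the parts `α, β, γ`, so independence can be checked
part by part. A base missing a part could be enlarged by a nonloop of that part, so it meets all
three parts and, having three elements, is a transversal; transversals are independent, hence
bases. Thus `C` is the convex hull of the transversals, and its direction space is the kernel of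
`Φ x = (x(α), x(β), x(γ))`.

If `D ⊇ C` is a cell of codimension one, `Φ` maps the direction space of `D` onto a line, and
for every base `τ` of the matroid of `D` (all transversals among them) the vector
`(|τ ∩ α| - 1, |τ ∩ β| - 1, |τ ∩ γ| - 1)` lies on that line. A base contained in a single part
has no zero coordinate there, while exchanging it against a transversal yields a base with
exactly one zero coordinate; so the line lies in a coordinate hyperplane, i.e. `D ⊆ H_α`, `H_β`
or `H_γ`.

Inside `H_α`, say, every such `D` has a point off `H_β`. Two of them with points on the same side
of `H_β` would meet in a common face containing `C`, hence of the dimension of `C` and contained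
in `H_β`; but starting from a relative interior point of `C` one finds a common point of both
cells off `H_β`. So each hyperplane carries at most two of the cells, six in all.
-/

open Set Module Function

section Matroid

variable {ι κ : Type*} {M : Matroid ι} {P : κ → Set ι}

theorem Set.range_inter_eq_singleton (hdisj : Pairwise (Disjoint on P)) {t : κ → ι}
    (ht : ∀ k, t k ∈ P k) (k : κ) : range t ∩ P k = {t k} := by
  refine subset_antisymm ?_ (singleton_subset_iff.2 ⟨mem_range_self k, ht k⟩)
  rintro _ ⟨⟨m, rfl⟩, hm⟩
  obtain rfl | hmk := eq_or_ne m k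
  · rfl
  · exact absurd hm ((hdisj hmk).notMem_of_mem_left (ht m))

theorem Matroid.IsCircuit.exists_subset_of_componentRel (hcover : ∀ x, ∃ k, x ∈ P k)
    (hP : ∀ k, ∀ x ∈ P k, ∀ y, y ∈ P k ↔ M.ComponentRel x y) {K : Set ι} (hK : M.IsCircuit K) :
    ∃ k, K ⊆ P k := by
  obtain ⟨x, hx⟩ := hK.nonempty
  obtain ⟨k, hk⟩ := hcover x
  have hK' : M.IsCircuit' K := ⟨hK.dep, fun D hD => (hK.ssubset_indep hD).not_dep⟩
  exact ⟨k, fun y hy => (hP k x hk y).2 (Or.inr ⟨K, hK', hx, hy⟩)⟩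

theorem Matroid.indep_of_forall_indep_inter (hP : ∀ K, M.IsCircuit K → ∃ k, K ⊆ P k)
    {I : Set ι} (hI : I ⊆ M.E) (h : ∀ k, M.Indep (I ∩ P k)) : M.Indep I := by
  rw [Matroid.indep_iff_forall_subset_not_isCircuit hI]
  intro K hKI hK
  obtain ⟨k, hk⟩ := hP K hK
  exact hK.not_indep ((h k).subset (subset_inter hKI hk))

theorem Matroid.IsBase.inter_nonempty (hdisj : Pairwise (Disjoint on P))
    (hP : ∀ K, M.IsCircuit K → ∃ k, K ⊆ P k) {B : Set ι} (hB : M.IsBase B) {k : κ} {x : ι}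
    (hxk : x ∈ P k) (hx : M.IsNonloop x) : (B ∩ P k).Nonempty := by
  rw [nonempty_iff_ne_empty, Ne, ← disjoint_iff_inter_eq_empty]
  intro hBk
  have hind : M.Indep (insert x B) := by
    refine M.indep_of_forall_indep_inter hP (insert_subset hx.mem_ground hB.subset_ground)
      fun m => ?_
    obtain rfl | hmk := eq_or_ne m k
    · exact hx.indep.subset fun y ⟨hy, hym⟩ =>
        hy.resolve_right fun hyB => hBk.notMem_of_mem_left hyB hym
    · refine hB.indep.subset fun y ⟨hy, hym⟩ => hy.resolve_left ?_
      rintro rfl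
      exact (hdisj hmk).notMem_of_mem_left hym hxk
  exact hBk.notMem_of_mem_left
    ((hB.eq_of_subset_indep hind (subset_insert _ _)) ▸ mem_insert x B) hxk

theorem Matroid.isBase_iff_exists_range_eq [Finite ι] (hdisj : Pairwise (Disjoint on P))
    (hP : ∀ K, M.IsCircuit K → ∃ k, K ⊆ P k) (hnl : ∀ k, ∀ x ∈ P k, M.IsNonloop x)
    (hne : ∀ k, (P k).Nonempty) (hcard : ∀ B, M.IsBase B → B.ncard = Nat.card κ)
    {B : Set ι} : M.IsBase B ↔ ∃ t : κ → ι, (∀ k, t k ∈ P k) ∧ B = range t := by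
  have hrange : ∀ t : κ → ι, (∀ k, t k ∈ P k) → (range t).ncard = Nat.card κ := by
    intro t ht
    refine ncard_range_of_injective fun a b hab => by_contra fun h => ?_
    exact (hdisj h).ne_of_mem (ht a) (ht b) hab
  constructor
  · intro hB
    choose t ht using fun k => (hne k).elim fun x hx => hB.inter_nonempty hdisj hP hx (hnl k x hx)
    refine ⟨t, fun k => (ht k).2, (eq_of_subset_of_ncard_le ?_ ?_).symm⟩
    · exact range_subset_iff.2 fun k => (ht k).1
    · rw [hcard B hB, hrange t fun k => (ht k).2]
  · rintro ⟨t, ht, rfl⟩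
    have hind : M.Indep (range t) := by
      refine M.indep_of_forall_indep_inter hP
        (range_subset_iff.2 fun k => (hnl k _ (ht k)).mem_ground) fun k => ?_
      rw [range_inter_eq_singleton hdisj ht k]
      exact (hnl k _ (ht k)).indep
    obtain ⟨B, hB, htB⟩ := hind.exists_isBase_superset
    rwa [eq_of_subset_of_ncard_le htB (by rw [hcard B hB, hrange t ht])]

theorem Set.ncard_eq_sum_ncard_inter [Finite ι] [Fintype κ] (hdisj : Pairwise (Disjoint on P))
    (hcover : ∀ x, ∃ k, x ∈ P k) (τ : Set ι) : τ.ncard = ∑ k, (τ ∩ P k).ncard := by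
  have hτ : τ = ⋃ k, τ ∩ P k := by
    ext x
    simp only [mem_iUnion, mem_inter_iff]
    exact ⟨fun hx => (hcover x).imp fun _ hk => ⟨hx, hk⟩, fun ⟨_, hx, _⟩ => hx⟩
  conv_lhs => rw [hτ]
  rw [ncard_iUnion_of_finite (fun _ => toFinite _)
    fun a b hab => (hdisj hab).mono inter_subset_right inter_subset_right,
    finsum_eq_sum_of_fintype]

theorem Set.exists_subset_of_ncard_inter_ne_one [Finite ι] {P : Fin 3 → Set ι}
    (hdisj : Pairwise (Disjoint on P)) (hcover : ∀ x, ∃ k, x ∈ P k) {τ : Set ι}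
    (hτ : τ.ncard = 3) (h1 : ∀ k, (τ ∩ P k).ncard ≠ 1) : ∃ k, τ ⊆ P k := by
  have hsum := ncard_eq_sum_ncard_inter hdisj hcover τ
  rw [Fin.sum_univ_three, hτ] at hsum
  obtain ⟨k, hk⟩ : ∃ k, (τ ∩ P k).ncard = 3 := by
    by_contra! h
    have := h 0; have := h 1; have := h 2; have := h1 0; have := h1 1; have := h1 2
    omega
  have hτk : τ ∩ P k = τ := eq_of_subset_of_ncard_le inter_subset_left (by rw [hτ, hk])
  exact ⟨k, hτk ▸ inter_subset_right⟩

theorem Matroid.IsBase.exists_isBase_ncard_inter_eq_one [Finite ι] {N : Matroid ι}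
    (hdisj : Pairwise (Disjoint on P)) (hne : ∀ k, (P k).Nonempty)
    (htrans : ∀ t : κ → ι, (∀ k, t k ∈ P k) → N.IsBase (range t)) {τ : Set ι}
    (hτ : N.IsBase τ) {k : κ} (hτk : τ ⊆ P k) (hτ2 : 1 < τ.ncard) :
    ∃ τ', N.IsBase τ' ∧ ∃ m ≠ k, (τ' ∩ P m).ncard = 1 ∧ (τ' ∩ P k).ncard = τ.ncard - 1 := by
  obtain ⟨x, hx, y, hy, hxy⟩ := one_lt_ncard_iff_nontrivial.1 hτ2
  choose t₀ ht₀ using hne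
  set t := update t₀ k x
  have ht : ∀ m, t m ∈ P m := fun m => by
    obtain rfl | hmk := eq_or_ne m k
    · simpa [t] using hτk hx
    · simpa [t, hmk] using ht₀ m
  have hyt : y ∉ range t := by
    rintro ⟨m, hm⟩
    obtain rfl | hmk := eq_or_ne m k
    · exact hxy (by simpa [t] using hm)
    · exact (hdisj hmk).ne_of_mem (ht m) (hτk hy) hm
  obtain ⟨f, ⟨⟨m, rfl⟩, hfτ⟩, hτ'⟩ := hτ.exchange (htrans t ht) ⟨hy, hyt⟩
  have hmk : m ≠ k := by
    rintro rfl
    exact hfτ (by simpa [t] using hx)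
  refine ⟨_, hτ', m, hmk, ?_, ?_⟩
  · rw [ncard_eq_one]
    refine ⟨t m, ?_⟩
    ext z
    simp only [mem_inter_iff, mem_insert_iff, mem_sdiff, mem_singleton_iff]
    refine ⟨?_, fun hz => ⟨Or.inl hz, hz ▸ ht m⟩⟩
    rintro ⟨hz | ⟨hzτ, -⟩, hzm⟩
    · exact hz
    · exact absurd hzm ((hdisj hmk).symm.notMem_of_mem_left (hτk hzτ))
  · have : insert (t m) (τ \ {y}) ∩ P k = τ \ {y} := by
      ext z
      simp only [mem_inter_iff, mem_insert_iff, mem_sdiff, mem_singleton_iff]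
      refine ⟨?_, fun hz => ⟨Or.inr hz, hτk hz.1⟩⟩
      rintro ⟨rfl | hz, hzk⟩
      · exact absurd hzk ((hdisj hmk).notMem_of_mem_left (ht m))
      · exact hz
    rw [this, ncard_sdiff_singleton_of_mem hy]

end Matroid

theorem Submodule.exists_smul_eq_of_finrank_le_one {K V : Type*} [Field K] [AddCommGroup V]
    [Module K V] [FiniteDimensional K V] {L : Submodule K V} (hL : finrank K L ≤ 1) {u w : V}
    (hu : u ∈ L) (hw : w ∈ L) (hu0 : u ≠ 0) : ∃ c : K, c • u = w := by
  have hL1 : finrank K L = 1 := by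
    refine le_antisymm hL (Nat.one_le_iff_ne_zero.2 fun h0 => hu0 ?_)
    simpa [Submodule.finrank_eq_zero.1 h0] using hu
  obtain ⟨c, hc⟩ := exists_smul_eq_of_finrank_eq_one hL1 (x := ⟨u, hu⟩)
    (by simpa using hu0) ⟨w, hw⟩
  exact ⟨c, congrArg Subtype.val hc⟩

theorem vectorSpan_le_ker_of_forall_eq {R V W : Type*} [Ring R] [AddCommGroup V] [Module R V]
    [AddCommGroup W] [Module R W] {s : Set V} (f : V →ₗ[R] W) {r : W} (h : ∀ x ∈ s, f x = r) :
    vectorSpan R s ≤ LinearMap.ker f := by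
  rw [vectorSpan_def, Submodule.span_le]
  rintro _ ⟨x, hx, y, hy, rfl⟩
  simp [h x hx, h y hy]

theorem Submodule.finrank_map_add_finrank_ker {K V V' : Type*} [DivisionRing K] [AddCommGroup V]
    [Module K V] [AddCommGroup V'] [Module K V'] [FiniteDimensional K V] (f : V →ₗ[K] V')
    {W : Submodule K V} (h : LinearMap.ker f ≤ W) :
    finrank K (W.map f) + finrank K (LinearMap.ker f) = finrank K W := by
  have := (f.domRestrict W).finrank_range_add_finrank_ker
  rwa [LinearMap.range_domRestrict, LinearMap.ker_domRestrict,
    (Submodule.comapSubtypeEquivOfLe h).finrank_eq] at this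

theorem convexHull_subset_setOf_eq {𝕜 E F : Type*} [Semiring 𝕜] [PartialOrder 𝕜]
    [AddCommMonoid E] [Module 𝕜 E] [AddCommMonoid F] [Module 𝕜 F] {s : Set E} (f : E →ₗ[𝕜] F)
    {r : F} (h : ∀ x ∈ s, f x = r) : convexHull 𝕜 s ⊆ {x | f x = r} :=
  convexHull_min h ((convex_singleton r).linear_preimage f)

theorem Matroid.exists_forall_isBase_ncard_inter_eq_one {ι : Type*} [Finite ι] {N : Matroid ι}
    {P : Fin 3 → Set ι} (hdisj : Pairwise (Disjoint on P)) (hcover : ∀ x, ∃ k, x ∈ P k)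
    (hne : ∀ k, (P k).Nonempty) (hcard : ∀ τ, N.IsBase τ → τ.ncard = 3)
    (htrans : ∀ t : Fin 3 → ι, (∀ k, t k ∈ P k) → N.IsBase (range t))
    {L : Submodule ℝ (Fin 3 → ℝ)} (hL : finrank ℝ L ≤ 1)
    (hu : ∀ τ, N.IsBase τ → (fun k => ((τ ∩ P k).ncard : ℝ) - 1) ∈ L) :
    ∃ k, ∀ τ, N.IsBase τ → (τ ∩ P k).ncard = 1 := by
  have hu0 : ∀ τ k, (τ ∩ P k).ncard ≠ 1 → (fun k => ((τ ∩ P k).ncard : ℝ) - 1) ≠ 0 :=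
    fun τ k hk h => hk (by exact_mod_cast sub_eq_zero.1 (congrFun h k))
  have hone : ∀ τ, N.IsBase τ → ∃ k, (τ ∩ P k).ncard = 1 := by
    intro τ hτ
    by_contra! h1
    obtain ⟨k, hτk⟩ := Set.exists_subset_of_ncard_inter_ne_one hdisj hcover (hcard τ hτ) h1
    obtain ⟨τ', hτ', m, -, hm, hk⟩ :=
      hτ.exists_isBase_ncard_inter_eq_one hdisj hne htrans hτk (by rw [hcard τ hτ]; norm_num)
    -- `τ'` meets `P m` once and `P k` twice, so its count vector is no multiple of that of `τ`
    obtain ⟨c, hc⟩ := Submodule.exists_smul_eq_of_finrank_le_one hL (hu τ hτ) (hu τ' hτ')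
      (hu0 τ 0 (h1 0))
    have hcm := congrFun hc m
    have hck := congrFun hc k
    simp only [Pi.smul_apply, smul_eq_mul, hm, hk, hcard τ hτ] at hcm hck
    have hc0 : c = 0 := by
      refine (mul_eq_zero.1 (by simpa using hcm)).resolve_right fun h => h1 m ?_
      exact_mod_cast sub_eq_zero.1 h
    norm_num [hc0] at hck
  by_cases hall : ∀ τ, N.IsBase τ → ∀ k, (τ ∩ P k).ncard = 1
  · exact ⟨0, fun τ hτ => hall τ hτ 0⟩
  push Not at hall
  obtain ⟨τ₀, hτ₀, k₀, hk₀⟩ := hall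
  obtain ⟨k, hk⟩ := hone τ₀ hτ₀
  refine ⟨k, fun τ hτ => ?_⟩
  obtain ⟨c, hc⟩ := Submodule.exists_smul_eq_of_finrank_le_one hL (hu τ₀ hτ₀) (hu τ hτ)
    (hu0 τ₀ k₀ hk₀)
  have hck := congrFun hc k
  simp only [Pi.smul_apply, smul_eq_mul, hk] at hck
  exact_mod_cast (sub_eq_zero.1 (by simpa using hck.symm) : ((τ ∩ P k).ncard : ℝ) = 1)

section PartSums

variable {ι κ : Type*}

noncomputable def sumOn (A : Finset ι) : (ι → ℝ) →ₗ[ℝ] ℝ where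
  toFun x := ∑ i ∈ A, x i
  map_add' _ _ := Finset.sum_add_distrib
  map_smul' c x := (Finset.mul_sum A x c).symm

@[simp]
theorem sumOn_apply (A : Finset ι) (x : ι → ℝ) : sumOn A x = ∑ i ∈ A, x i := rfl

noncomputable def partSums (P : κ → Finset ι) : (ι → ℝ) →ₗ[ℝ] κ → ℝ :=
  LinearMap.pi fun k => sumOn (P k)

@[simp]
theorem partSums_apply (P : κ → Finset ι) (x : ι → ℝ) (k : κ) :
    partSums P x k = ∑ i ∈ P k, x i := rfl

variable {P : κ → Finset ι}

theorem sum_partSums [Fintype ι] [Fintype κ] (hdisj : Pairwise (Disjoint on P))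
    (hcover : ∀ i, ∃ k, i ∈ P k) (x : ι → ℝ) : ∑ k, partSums P x k = ∑ i, x i := by
  simp only [partSums_apply]
  rw [← Finset.sum_biUnion fun a _ b _ hab => hdisj hab]
  congr 1
  ext i
  simpa using hcover i

theorem partSums_surjective [Fintype κ] (hdisj : Pairwise (Disjoint on P))
    (hne : ∀ k, (P k).Nonempty) : Surjective (partSums P) := by
  choose t ht using hne
  have hmem : ∀ k m, t k ∈ P m ↔ k = m := fun k m =>
    ⟨fun h => by_contra fun hkm => Finset.disjoint_left.1 (hdisj hkm) (ht k) h, fun h => h ▸ ht k⟩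
  intro y
  refine ⟨∑ k, y k • Pi.single (t k) 1, funext fun m => ?_⟩
  simp [Finset.sum_apply, Pi.single_apply, Finset.sum_comm (s := P m), hmem]

theorem finrank_ker_partSums [Fintype ι] [Fintype κ] (hdisj : Pairwise (Disjoint on P))
    (hne : ∀ k, (P k).Nonempty) :
    finrank ℝ (LinearMap.ker (partSums P)) + Fintype.card κ = Fintype.card ι := by
  have h := (partSums P).finrank_range_add_finrank_ker
  rw [LinearMap.range_eq_top.2 (partSums_surjective hdisj hne), finrank_top] at h
  simpa [add_comm] using h

theorem inf_ker_sumOn_le_ker_partSums [Fintype ι] {P : Fin 3 → Finset ι}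
    (hdisj : Pairwise (Disjoint on P)) (hcover : ∀ i, ∃ k, i ∈ P k) {k m : Fin 3} (hkm : k ≠ m) :
    LinearMap.ker (sumOn (P k)) ⊓ LinearMap.ker (sumOn Finset.univ) ⊓
      LinearMap.ker (sumOn (P m)) ≤ LinearMap.ker (partSums P) := by
  rintro x ⟨⟨hk, hu⟩, hm⟩
  simp only [SetLike.mem_coe, LinearMap.mem_ker, sumOn_apply] at hk hu hm
  refine LinearMap.mem_ker.2 (funext fun j => ?_)
  obtain rfl | hjk := eq_or_ne j k
  · simpa using hk
  obtain rfl | hjm := eq_or_ne j m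
  · simpa using hm
  have hsum := sum_partSums hdisj hcover x
  rw [hu, Finset.sum_eq_single j] at hsum
  · simpa using hsum
  · intro j' _ hj'
    have : j' = k ∨ j' = m := by omega
    rcases this with rfl | rfl <;> simpa
  · simp

end PartSums

theorem Set.ncard_le_two_of_sameSide {E : Type*} {T : Set (Set E)} (hT : T.Finite)
    (f : E → ℝ) (r : ℝ) (hoff : ∀ D ∈ T, ∃ p ∈ D, f p ≠ r)
    (hside : ∀ D₁ ∈ T, ∀ D₂ ∈ T, ∀ p₁ ∈ D₁, ∀ p₂ ∈ D₂, 0 < (f p₁ - r) * (f p₂ - r) → D₁ = D₂) :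
    T.ncard ≤ 2 := by
  have hgt : {D ∈ T | ∃ p ∈ D, r < f p}.ncard ≤ 1 :=
    (ncard_le_one (hT.subset fun _ h => h.1)).2 fun D₁ ⟨hD₁, p₁, hp₁, h₁⟩ D₂ ⟨hD₂, p₂, hp₂, h₂⟩ =>
      hside D₁ hD₁ D₂ hD₂ p₁ hp₁ p₂ hp₂ (mul_pos (by linarith) (by linarith))
  have hlt : {D ∈ T | ∃ p ∈ D, f p < r}.ncard ≤ 1 :=
    (ncard_le_one (hT.subset fun _ h => h.1)).2 fun D₁ ⟨hD₁, p₁, hp₁, h₁⟩ D₂ ⟨hD₂, p₂, hp₂, h₂⟩ =>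
      hside D₁ hD₁ D₂ hD₂ p₁ hp₁ p₂ hp₂ (mul_pos_of_neg_of_neg (by linarith) (by linarith))
  have hsplit : T ⊆ {D ∈ T | ∃ p ∈ D, r < f p} ∪ {D ∈ T | ∃ p ∈ D, f p < r} := by
    intro D hD
    obtain ⟨p, hp, hpr⟩ := hoff D hD
    rcases hpr.lt_or_gt with h | h
    · exact Or.inr ⟨hD, p, hp, h⟩
    · exact Or.inl ⟨hD, p, hp, h⟩
  calc T.ncard ≤ _ := ncard_le_ncard hsplit
        ((hT.subset fun _ h => h.1).union (hT.subset fun _ h => h.1))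
    _ ≤ _ := ncard_union_le _ _
    _ ≤ 2 := by omega

section ConvexGeometry

open Filter Topology

variable {E : Type*} [NormedAddCommGroup E] [NormedSpace ℝ E]

theorem eventually_add_smul_mem_of_mem_intrinsicInterior {C : Set E} {c v : E}
    (hc : c ∈ intrinsicInterior ℝ C) (hv : v ∈ vectorSpan ℝ C) :
    ∀ᶠ t in 𝓝 (0 : ℝ), c + t • v ∈ C := by
  obtain ⟨y, hy, rfl⟩ := hc
  rw [← direction_affineSpan] at hv
  let φ : ℝ → affineSpan ℝ C := fun t =>
    ⟨t • v +ᵥ (y : E), AffineSubspace.vadd_mem_of_mem_direction (Submodule.smul_mem _ t hv) y.2⟩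
  have hφ : Continuous φ := by fun_prop
  have hφ0 : φ 0 = y := by ext; simp [φ]
  filter_upwards [hφ.continuousAt.preimage_mem_nhds (hφ0 ▸ isOpen_interior.mem_nhds hy)]
    with t ht
  simpa [φ, add_comm] using interior_subset ht

theorem exists_pos_add_smul_mem_of_mem_intrinsicInterior {C : Set E} {c v : E}
    (hc : c ∈ intrinsicInterior ℝ C) (hv : v ∈ vectorSpan ℝ C) :
    ∃ t : ℝ, 0 < t ∧ c + t • v ∈ C :=
  ((eventually_nhdsWithin_of_eventually_nhds
    (eventually_add_smul_mem_of_mem_intrinsicInterior hc hv)).and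
      (self_mem_nhdsWithin (s := Ioi 0))).exists.imp fun _ h => ⟨h.2, h.1⟩

theorem IsExtreme.eq_of_vectorSpan_eq [FiniteDimensional ℝ E] {F D : Set E}
    (hFD : IsExtreme ℝ D F) (hF : Convex ℝ F) (hne : F.Nonempty)
    (hspan : vectorSpan ℝ F = vectorSpan ℝ D) : F = D := by
  obtain ⟨c, hc⟩ := hne.intrinsicInterior hF
  have hcF := intrinsicInterior_subset hc
  refine hFD.1.antisymm fun y hy => ?_
  have hv : c - y ∈ vectorSpan ℝ F := hspan ▸ vsub_mem_vectorSpan ℝ (hFD.1 hcF) hy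
  obtain ⟨t, ht, hz⟩ := exists_pos_add_smul_mem_of_mem_intrinsicInterior hc hv
  refine hFD.2 hy (hFD.1 hz) hcF ⟨t / (1 + t), 1 / (1 + t), by positivity, by positivity,
    by field_simp; ring, ?_⟩
  match_scalars <;> field_simp
  ring

/-- The point `c + t • w₁` is a convex combination of `c` and `c + w₁`, and also of
`c + s • v` and `c + w₂` for `s = t / (1 - t * μ)`. -/
theorem exists_pos_add_smul_mem_inter {D₁ D₂ : Set E} (h₁ : Convex ℝ D₁) (h₂ : Convex ℝ D₂)
    {c v w₁ w₂ : E} {μ : ℝ} (hμ : 0 < μ) (hc : c ∈ D₁)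
    (hv : ∀ᶠ s in 𝓝 (0 : ℝ), c + s • v ∈ D₂) (hw₁ : c + w₁ ∈ D₁) (hw₂ : c + w₂ ∈ D₂)
    (hw : w₁ = μ • w₂ + v) : ∃ t : ℝ, 0 < t ∧ c + t • w₁ ∈ D₁ ∩ D₂ := by
  have hlim : Tendsto (fun t : ℝ => t / (1 - t * μ)) (𝓝 0) (𝓝 0) := by
    have : ContinuousAt (fun t : ℝ => t / (1 - t * μ)) 0 := by fun_prop (disch := simp)
    simpa using this.tendsto
  have hsmall : ∀ᶠ t in 𝓝 (0 : ℝ), t < 1 ∧ t < 1 / μ :=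
    (eventually_lt_nhds one_pos).and (eventually_lt_nhds (by positivity))
  obtain ⟨t, ⟨⟨ht1, htμ⟩, hs⟩, ht0 : 0 < t⟩ :=
    ((eventually_nhdsWithin_of_eventually_nhds (hsmall.and (hlim.eventually hv))).and
      (self_mem_nhdsWithin (s := Ioi 0))).exists
  replace htμ : t * μ < 1 := (lt_div_iff₀ hμ).1 htμ
  refine ⟨t, ht0, ?_, ?_⟩
  · convert h₁ hc hw₁ (sub_nonneg.2 ht1.le) ht0.le (by ring) using 1
    module
  · convert h₂ hs hw₂ (sub_nonneg.2 htμ.le) (by positivity : 0 ≤ t * μ) (by ring) using 1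
    rw [hw]
    have : 1 - t * μ ≠ 0 := (sub_pos.2 htμ).ne'
    match_scalars <;> field_simp
    ring

end ConvexGeometry

theorem IsPolytope.convex {E : Type*} [AddCommGroup E] [Module ℝ E] {P : Set E}
    (hP : IsPolytope P) : Convex ℝ P := by
  obtain ⟨s, rfl⟩ := hP
  exact convex_convexHull ℝ _

section Subdivision

variable {E : Type*} [NormedAddCommGroup E] [NormedSpace ℝ E] [FiniteDimensional ℝ E]
  {Q : Set E} {S : Set (Set E)}

theorem IsSubdivision.vectorSpan_inter_eq (hS : IsSubdivision Q S) {C D₁ D₂ : Set E}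
    (hD₁ : D₁ ∈ S) (hD₂ : D₂ ∈ S) (hne : D₁ ≠ D₂) (hCD₁ : C ⊆ D₁) (hCD₂ : C ⊆ D₂)
    (hdim₁ : finrank ℝ (vectorSpan ℝ D₁) = finrank ℝ (vectorSpan ℝ C) + 1)
    (hdim₂ : finrank ℝ (vectorSpan ℝ D₂) = finrank ℝ (vectorSpan ℝ C) + 1) (hC : C.Nonempty) :
    vectorSpan ℝ (D₁ ∩ D₂) = vectorSpan ℝ C := by
  have hCF : C ⊆ D₁ ∩ D₂ := subset_inter hCD₁ hCD₂
  have hlt : ∀ D, IsFaceOf (D₁ ∩ D₂) D → D₁ ∩ D₂ ≠ D →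
      finrank ℝ (vectorSpan ℝ (D₁ ∩ D₂)) < finrank ℝ (vectorSpan ℝ D) := fun D hF hFD =>
    Submodule.finrank_lt_finrank_of_lt <| (vectorSpan_mono ℝ hF.1.1).lt_of_ne fun h =>
      hFD (hF.1.eq_of_vectorSpan_eq hF.2 (hC.mono hCF) h)
  refine (Submodule.eq_of_le_of_finrank_le (vectorSpan_mono ℝ hCF) ?_).symm
  by_cases h₁ : D₁ ∩ D₂ = D₁
  · have := hlt D₂ (inter_comm D₁ D₂ ▸ hS.inter_face D₂ hD₂ D₁ hD₁)
      fun h₂ => hne (h₁.symm.trans h₂)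
    omega
  · have := hlt D₁ (hS.inter_face D₁ hD₁ D₂ hD₂) h₁
    omega

theorem IsSubdivision.eq_of_sameSide (hS : IsSubdivision Q S) {C D₁ D₂ : Set E} (hC : C ∈ S)
    (hD₁ : D₁ ∈ S) (hD₂ : D₂ ∈ S) (hCD₁ : C ⊆ D₁) (hCD₂ : C ⊆ D₂)
    (hdim₁ : finrank ℝ (vectorSpan ℝ D₁) = finrank ℝ (vectorSpan ℝ C) + 1)
    (hdim₂ : finrank ℝ (vectorSpan ℝ D₂) = finrank ℝ (vectorSpan ℝ C) + 1)
    {V : Submodule ℝ E} (hV₁ : vectorSpan ℝ D₁ ≤ V) (hV₂ : vectorSpan ℝ D₂ ≤ V)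
    {f : E →ₗ[ℝ] ℝ} {r : ℝ} (hfC : ∀ x ∈ C, f x = r)
    (hVf : V ⊓ LinearMap.ker f ≤ vectorSpan ℝ C) {p₁ p₂ : E} (hp₁ : p₁ ∈ D₁) (hp₂ : p₂ ∈ D₂)
    (hsign : 0 < (f p₁ - r) * (f p₂ - r)) : D₁ = D₂ := by
  by_contra hne
  have hCne := hS.nonempty_cell C hC
  obtain ⟨c, hc⟩ := hCne.intrinsicInterior (hS.poly C hC).convex
  have hcC := intrinsicInterior_subset hc
  have hfc := hfC c hcC
  have hF := hS.vectorSpan_inter_eq hD₁ hD₂ hne hCD₁ hCD₂ hdim₁ hdim₂ hCne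
  have hfF : ∀ x ∈ D₁ ∩ D₂, f x = r := by
    intro x hx
    have : x - c ∈ LinearMap.ker f := vectorSpan_le_ker_of_forall_eq f hfC
      (hF ▸ vsub_mem_vectorSpan ℝ hx ⟨hCD₁ hcC, hCD₂ hcC⟩)
    rwa [LinearMap.mem_ker, map_sub, hfc, sub_eq_zero] at this
  have h₁ : f p₁ - r ≠ 0 := left_ne_zero_of_mul hsign.ne'
  have h₂ : f p₂ - r ≠ 0 := right_ne_zero_of_mul hsign.ne'
  set μ := (f p₁ - r) / (f p₂ - r)
  have hμ : 0 < μ := by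
    rcases mul_pos_iff.1 hsign with ⟨h, h'⟩ | ⟨h, h'⟩
    · exact div_pos h h'
    · exact div_pos_of_neg_of_neg h h'
  set v := (p₁ - c) - μ • (p₂ - c)
  have hv : v ∈ vectorSpan ℝ C := by
    refine hVf ⟨sub_mem (hV₁ (vsub_mem_vectorSpan ℝ hp₁ (hCD₁ hcC)))
      (Submodule.smul_mem _ _ (hV₂ (vsub_mem_vectorSpan ℝ hp₂ (hCD₂ hcC)))),
      LinearMap.mem_ker.2 ?_⟩
    rw [map_sub, map_smul, map_sub, map_sub, hfc, smul_eq_mul, div_mul_cancel₀ _ h₂, sub_self]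
  obtain ⟨t, ht, hx⟩ := exists_pos_add_smul_mem_inter (hS.poly D₁ hD₁).convex
    (hS.poly D₂ hD₂).convex hμ (hCD₁ hcC)
    ((eventually_add_smul_mem_of_mem_intrinsicInterior hc hv).mono fun _ hs => hCD₂ hs)
    (w₁ := p₁ - c) (w₂ := p₂ - c) (by simpa using hp₁) (by simpa using hp₂) (by simp [v])
  have hfx := hfF _ hx
  rw [map_add, map_smul, map_sub, hfc, smul_eq_mul, add_eq_left] at hfx
  exact mul_ne_zero ht.ne' h₁ hfx

end Subdivision

section Hypersimplex

variable {n : ℕ}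

theorem indicatorVec_injective : Injective (indicatorVec (n := n)) := by
  intro b b' h
  ext i
  have := congrFun h i
  by_cases hb : i ∈ b <;> by_cases hb' : i ∈ b' <;> simp_all [indicatorVec]

theorem sum_indicatorVec (A : Finset (Fin n)) (b : Set (Fin n)) :
    ∑ i ∈ A, indicatorVec b i = ((b ∩ A).ncard : ℝ) := by
  have : b ∩ A = ↑(A.filter (· ∈ b)) := by ext; simp [and_comm]
  rw [this, ncard_coe_finset]
  simp [indicatorVec, Finset.sum_boole]

theorem partSums_indicatorVec_range {κ : Type*} {P : κ → Finset (Fin n)}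
    (hdisj : Pairwise (Disjoint on P)) {t : κ → Fin n} (ht : ∀ k, t k ∈ P k) :
    partSums P (indicatorVec (range t)) = 1 := by
  ext k
  simp [sum_indicatorVec, range_inter_eq_singleton (P := fun k => (P k : Set (Fin n)))
    (fun i j h => Finset.disjoint_coe.2 (hdisj h)) ht k]

theorem sum_eq_of_mem_hypersimplex {k : ℕ} {x : Fin n → ℝ} (hx : x ∈ hypersimplex k n) :
    ∑ i, x i = k := by
  refine convexHull_subset_setOf_eq (sumOn Finset.univ) ?_ hx
  rintro _ ⟨σ, hσ, rfl⟩
  simp [sum_indicatorVec, hσ]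

theorem ncard_eq_of_indicatorVec_mem_hypersimplex {k : ℕ} {b : Set (Fin n)}
    (h : indicatorVec b ∈ hypersimplex k n) : b.ncard = k := by
  simpa [sum_indicatorVec] using sum_eq_of_mem_hypersimplex h

theorem mem_of_indicatorVec_mem_convexHull {p : Set (Fin n) → Prop} {b : Set (Fin n)}
    (h : indicatorVec b ∈ convexHull ℝ {x | ∃ b', p b' ∧ x = indicatorVec b'}) : p b := by
  have hbox : convexHull ℝ {x | ∃ b', p b' ∧ x = indicatorVec b'} ⊆
      univ.pi fun _ => Icc (0 : ℝ) 1 := by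
    refine convexHull_min ?_ (convex_pi fun _ _ => convex_Icc 0 1)
    rintro _ ⟨b', -, rfl⟩ i -
    by_cases hi : i ∈ b' <;> simp [indicatorVec, hi]
  have hext : indicatorVec b ∈ (univ.pi fun _ => Icc (0 : ℝ) 1).extremePoints ℝ := by
    rw [extremePoints_pi]
    rintro i -
    by_cases hi : i ∈ b <;> simp [indicatorVec, hi]
  obtain ⟨b', hb', he⟩ := extremePoints_convexHull_subset
    (inter_extremePoints_subset_extremePoints_of_subset hbox ⟨h, hext⟩)
  rwa [indicatorVec_injective he]

end Hypersimplex

section Cells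

variable {n : ℕ} {P : Fin 3 → Finset (Fin n)}

theorem vectorSpan_eq_ker_partSums (hdisj : Pairwise (Disjoint on P)) (hne : ∀ k, (P k).Nonempty)
    {C : Set (Fin n → ℝ)} (hCP : ∀ x ∈ C, partSums P x = 1)
    (hdim : finrank ℝ (vectorSpan ℝ C) = n - 3) :
    vectorSpan ℝ C = LinearMap.ker (partSums P) := by
  refine Submodule.eq_of_le_of_finrank_le (vectorSpan_le_ker_of_forall_eq _ hCP) ?_
  have := finrank_ker_partSums hdisj hne
  simp only [Fintype.card_fin] at this
  omega

theorem exists_subset_sum_eq_one_of_codim_one (hdisj : Pairwise (Disjoint on P))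
    (hcover : ∀ i, ∃ k, i ∈ P k) (hne : ∀ k, (P k).Nonempty) {C D : Set (Fin n → ℝ)}
    (hCspan : vectorSpan ℝ C = LinearMap.ker (partSums P))
    (htrans : ∀ t : Fin 3 → Fin n, (∀ k, t k ∈ P k) → indicatorVec (range t) ∈ C)
    (hD : IsMatroidPolytope 3 n D) (hCD : C ⊆ D) (hdim : finrank ℝ (vectorSpan ℝ D) = n - 2) :
    ∃ k, D ⊆ {x | ∑ i ∈ P k, x i = 1} := by
  obtain ⟨N, -, hN3, hDN⟩ := hD
  have hbase : ∀ b, N.IsBase b → indicatorVec b ∈ D :=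
    fun b hb => hDN ▸ subset_convexHull ℝ _ ⟨b, hb, rfl⟩
  have hNtrans : ∀ t : Fin 3 → Fin n, (∀ k, t k ∈ P k) → N.IsBase (range t) :=
    fun t ht => mem_of_indicatorVec_mem_convexHull (hDN ▸ hCD (htrans t ht))
  choose t₀ ht₀ using hne
  have hL : finrank ℝ ((vectorSpan ℝ D).map (partSums P)) ≤ 1 := by
    have := Submodule.finrank_map_add_finrank_ker (partSums P) (hCspan ▸ vectorSpan_mono ℝ hCD)
    have := finrank_ker_partSums hdisj fun k => ⟨t₀ k, ht₀ k⟩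
    simp only [Fintype.card_fin] at this
    omega
  obtain ⟨k, hk⟩ := N.exists_forall_isBase_ncard_inter_eq_one
    (fun i j h => Finset.disjoint_coe.2 (hdisj h)) (by simpa using hcover)
    (fun k => ⟨t₀ k, ht₀ k⟩) hN3 hNtrans hL fun τ hτ =>
      ⟨indicatorVec τ - indicatorVec (range t₀),
        vsub_mem_vectorSpan ℝ (hbase τ hτ) (hbase _ (hNtrans t₀ ht₀)),
        by rw [map_sub, partSums_indicatorVec_range hdisj ht₀]; ext m; simp [sum_indicatorVec]⟩
  refine ⟨k, hDN ▸ convexHull_subset_setOf_eq (sumOn (P k)) ?_⟩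
  rintro _ ⟨b, hb, rfl⟩
  simp [sum_indicatorVec, hk b hb]

theorem ncard_codim_one_subset_sum_eq_one_le_two {S : Set (Set (Fin n → ℝ))}
    (hS : IsSubdivision (hypersimplex 3 n) S) (hdisj : Pairwise (Disjoint on P))
    (hcover : ∀ i, ∃ k, i ∈ P k) (hne : ∀ k, (P k).Nonempty) {C : Set (Fin n → ℝ)} (hC : C ∈ S)
    (hCP : ∀ x ∈ C, partSums P x = 1) (hCspan : vectorSpan ℝ C = LinearMap.ker (partSums P))
    (k : Fin 3) :
    {D | (D ∈ S ∧ C ⊆ D ∧ finrank ℝ (vectorSpan ℝ D) = n - 2) ∧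
      D ⊆ {x | ∑ i ∈ P k, x i = 1}}.ncard ≤ 2 := by
  set T := {D | (D ∈ S ∧ C ⊆ D ∧ finrank ℝ (vectorSpan ℝ D) = n - 2) ∧
      D ⊆ {x | ∑ i ∈ P k, x i = 1}}
  have hdimC : finrank ℝ (vectorSpan ℝ C) + 3 = n := by
    rw [hCspan]; simpa using finrank_ker_partSums hdisj hne
  have hkm : k ≠ k + 1 := by fin_cases k <;> decide
  set f := sumOn (P (k + 1))
  set V := LinearMap.ker (sumOn (P k)) ⊓ LinearMap.ker (sumOn Finset.univ)
  have hV : ∀ D ∈ T, vectorSpan ℝ D ≤ V := fun D ⟨⟨hD, _⟩, hDk⟩ =>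
    le_inf (vectorSpan_le_ker_of_forall_eq _ hDk) (vectorSpan_le_ker_of_forall_eq _ fun x hx =>
      (sumOn_apply _ x).trans (sum_eq_of_mem_hypersimplex (hS.cover ▸ mem_sUnion_of_mem hx hD)))
  have hVf : V ⊓ LinearMap.ker f ≤ vectorSpan ℝ C :=
    hCspan ▸ inf_ker_sumOn_le_ker_partSums hdisj hcover hkm
  have hfC : ∀ x ∈ C, f x = 1 := fun x hx => by simpa [f] using congrFun (hCP x hx) (k + 1)
  refine ncard_le_two_of_sameSide (hS.finite.subset fun D hD => hD.1.1) f 1 ?_ ?_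
  · rintro D hDT
    by_contra! h
    have := Submodule.finrank_mono
      ((le_inf (hV D hDT) (vectorSpan_le_ker_of_forall_eq f h)).trans hVf)
    rw [hDT.1.2.2] at this
    omega
  · intro D₁ hD₁ D₂ hD₂ p₁ hp₁ p₂ hp₂ hsign
    exact hS.eq_of_sameSide hC hD₁.1.1 hD₂.1.1 hD₁.1.2.1 hD₂.1.2.1 (by rw [hD₁.1.2.2]; omega)
      (by rw [hD₂.1.2.2]; omega) (hV D₁ hD₁) (hV D₂ hD₂) hfC hVf hp₁ hp₂ hsign

theorem ncard_codim_one_le_six {S : Set (Set (Fin n → ℝ))}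
    (hS : IsSubdivision (hypersimplex 3 n) S) (hdisj : Pairwise (Disjoint on P))
    (hcover : ∀ i, ∃ k, i ∈ P k) (hne : ∀ k, (P k).Nonempty) {C : Set (Fin n → ℝ)} (hC : C ∈ S)
    (hCP : ∀ x ∈ C, partSums P x = 1) (hCspan : vectorSpan ℝ C = LinearMap.ker (partSums P))
    (hfacet : ∀ D ∈ S, C ⊆ D → finrank ℝ (vectorSpan ℝ D) = n - 2 →
      ∃ k, D ⊆ {x | ∑ i ∈ P k, x i = 1}) :
    {D | D ∈ S ∧ C ⊆ D ∧ finrank ℝ (vectorSpan ℝ D) = n - 2}.ncard ≤ 6 :=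
  calc _ ≤ (⋃ k, {D | (D ∈ S ∧ C ⊆ D ∧ finrank ℝ (vectorSpan ℝ D) = n - 2) ∧
        D ⊆ {x | ∑ i ∈ P k, x i = 1}}).ncard :=
        ncard_le_ncard
          (fun D hD => mem_iUnion.2 ((hfacet D hD.1 hD.2.1 hD.2.2).imp fun _ hk => ⟨hD, hk⟩))
          (hS.finite.subset (iUnion_subset fun _ _ hD => hD.1.1))
    _ ≤ ∑ _ : Fin 3, 2 := (ncard_iUnion_le_of_fintype _).trans (Finset.sum_le_sum fun k _ =>
        ncard_codim_one_subset_sum_eq_one_le_two hS hdisj hcover hne hC hCP hCspan k)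
    _ = 6 := by simp

end Cells

section ThreeParts

variable {ι : Type*} {α β γ : Finset ι}

theorem pairwise_disjoint_vecCons_three (hαβ : Disjoint α β) (hαγ : Disjoint α γ)
    (hβγ : Disjoint β γ) : Pairwise (Disjoint on ![α, β, γ]) := by
  intro i j hij
  fin_cases i <;> fin_cases j <;> simp_all [onFun, disjoint_comm]

theorem exists_mem_vecCons_three [Fintype ι] [DecidableEq ι] (hcover : α ∪ β ∪ γ = Finset.univ)
    (i : ι) : ∃ k, i ∈ ![α, β, γ] k := by
  have hi : i ∈ α ∪ β ∪ γ := hcover ▸ Finset.mem_univ i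
  simpa [Fin.exists_fin_succ, or_assoc] using hi

theorem exists_range_eq_iff_three {b : Set ι} :
    (∃ t : Fin 3 → ι, (∀ k, t k ∈ ![α, β, γ] k) ∧ b = range t) ↔
      ∃ i ∈ α, ∃ j ∈ β, ∃ l ∈ γ, b = {i, j, l} := by
  constructor
  · rintro ⟨t, ht, rfl⟩
    exact ⟨t 0, ht 0, t 1, ht 1, t 2, ht 2, by ext; simp [Fin.exists_fin_succ, eq_comm]⟩
  · rintro ⟨i, hi, j, hj, l, hl, rfl⟩
    refine ⟨![i, j, l], fun k => ?_, by ext; simp; tauto⟩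
    fin_cases k <;> assumption

end ThreeParts

theorem codim_two_cell_structure_general (n : ℕ)
    (S : Set (Set (Fin n → ℝ))) (hS : IsSubdivision (hypersimplex 3 n) S)
    (hmat : ∀ D ∈ S, IsMatroidPolytope 3 n D)
    (C : Set (Fin n → ℝ)) (hC : C ∈ S)
    (M : Matroid (Fin n))
    (hCM : C = convexHull ℝ {x | ∃ b, M.IsBase b ∧ x = indicatorVec b})
    (hloopfree : ∀ e, ∃ B, M.IsBase B ∧ e ∈ B)
    (α β γ : Finset (Fin n))
    (hαne : α.Nonempty) (hβne : β.Nonempty) (hγne : γ.Nonempty)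
    (hdisjαβ : Disjoint α β) (hdisjαγ : Disjoint α γ) (hdisjβγ : Disjoint β γ)
    (hcover : α ∪ β ∪ γ = Finset.univ)
    (hcompα : ∀ x ∈ α, ∀ y, y ∈ α ↔ M.ComponentRel x y)
    (hcompβ : ∀ x ∈ β, ∀ y, y ∈ β ↔ M.ComponentRel x y)
    (hcompγ : ∀ x ∈ γ, ∀ y, y ∈ γ ↔ M.ComponentRel x y)
    (hcodim2 : Module.finrank ℝ (vectorSpan ℝ C) = n - 3) :
    (∀ b : Set (Fin n), M.IsBase b ↔ ∃ i ∈ α, ∃ j ∈ β, ∃ l ∈ γ, b = {i, j, l}) ∧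
    (∀ D ∈ S, C ⊆ D → Module.finrank ℝ (vectorSpan ℝ D) = n - 2 →
      (D ⊆ {x | ∑ i ∈ α, x i = 1} ∨ D ⊆ {x | ∑ i ∈ β, x i = 1} ∨
        D ⊆ {x | ∑ i ∈ γ, x i = 1})) ∧
    {D | D ∈ S ∧ C ⊆ D ∧ Module.finrank ℝ (vectorSpan ℝ D) = n - 2}.ncard ≤ 6 := by
  set P : Fin 3 → Finset (Fin n) := ![α, β, γ]
  have hdisj : Pairwise (Disjoint on P) := pairwise_disjoint_vecCons_three hdisjαβ hdisjαγ hdisjβγ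
  have hcover : ∀ i, ∃ k, i ∈ P k := exists_mem_vecCons_three hcover
  have hne : ∀ k, (P k).Nonempty := by simp [Fin.forall_fin_succ, P, *]
  have hcard : ∀ B, M.IsBase B → B.ncard = 3 := fun B hB =>
    ncard_eq_of_indicatorVec_mem_hypersimplex
      (hS.cover ▸ mem_sUnion_of_mem (hCM ▸ subset_convexHull ℝ _ ⟨B, hB, rfl⟩) hC)
  have hbases : ∀ b, M.IsBase b ↔ ∃ t : Fin 3 → Fin n, (∀ k, t k ∈ P k) ∧ b = range t :=
    fun b => M.isBase_iff_exists_range_eq (fun i j h => Finset.disjoint_coe.2 (hdisj h))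
      (fun K hK => hK.exists_subset_of_componentRel (P := fun k => (P k : Set (Fin n)))
        (by simpa using hcover) (by simpa [Fin.forall_fin_succ, P] using ⟨hcompα, hcompβ, hcompγ⟩))
      (fun _ x _ => (hloopfree x).elim fun B hB => hB.1.indep.isNonloop_of_mem hB.2)
      (fun k => Finset.coe_nonempty.2 (hne k)) (by simpa using hcard)
  have hCP : ∀ x ∈ C, partSums P x = 1 :=
    hCM ▸ convexHull_subset_setOf_eq _ fun _ ⟨b, hb, hx⟩ => by
      obtain ⟨t, ht, rfl⟩ := (hbases b).1 hb
      exact hx ▸ partSums_indicatorVec_range hdisj ht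
  have hCspan := vectorSpan_eq_ker_partSums hdisj hne hCP hcodim2
  have hfacet : ∀ D ∈ S, C ⊆ D → finrank ℝ (vectorSpan ℝ D) = n - 2 →
      ∃ k, D ⊆ {x | ∑ i ∈ P k, x i = 1} := fun D hD hCD hdim =>
    exists_subset_sum_eq_one_of_codim_one hdisj hcover hne hCspan
      (fun t ht => hCM ▸ subset_convexHull ℝ _ ⟨_, (hbases _).2 ⟨t, ht, rfl⟩, rfl⟩)
      (hmat D hD) hCD hdim
  refine ⟨fun b => (hbases b).trans exists_range_eq_iff_three, fun D hD hCD hdim => ?_,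
    ncard_codim_one_le_six hS hdisj hcover hne hC hCP hCspan hfacet⟩
  simpa [Fin.exists_fin_succ, P] using hfacet D hD hCD hdim

/-- Let `C` be a codimension-2 cell of a matroid subdivision of `Δ(3,n)` whose matroid
`M` is loop-free with three connected components `α, β, γ` partitioning `[n]`.  Then the
bases of `M` are exactly the transversals `{i,j,ℓ}` with `i ∈ α`, `j ∈ β`, `ℓ ∈ γ`;
every codimension-1 cell containing `C` lies in one of the hyperplanes `H_α`, `H_β`,
`H_γ`; and `C` is contained in at most six codimension-1 cells. -/
theorem codim_two_cell_structure (n : ℕ) (hn : 3 < n)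
    (S : Set (Set (Fin n → ℝ))) (hS : IsSubdivision (hypersimplex 3 n) S)
    (hmat : ∀ D ∈ S, IsMatroidPolytope 3 n D)
    (C : Set (Fin n → ℝ)) (hC : C ∈ S)
    (M : Matroid (Fin n)) (hE : M.E = Set.univ)
    (hCM : C = convexHull ℝ {x | ∃ b, M.IsBase b ∧ x = indicatorVec b})
    (hloopfree : ∀ e, ∃ B, M.IsBase B ∧ e ∈ B)
    (α β γ : Finset (Fin n))
    (hαne : α.Nonempty) (hβne : β.Nonempty) (hγne : γ.Nonempty)
    (hdisjαβ : Disjoint α β) (hdisjαγ : Disjoint α γ) (hdisjβγ : Disjoint β γ)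
    (hcover : α ∪ β ∪ γ = Finset.univ)
    (hcompα : ∀ x ∈ α, ∀ y, y ∈ α ↔ M.ComponentRel x y)
    (hcompβ : ∀ x ∈ β, ∀ y, y ∈ β ↔ M.ComponentRel x y)
    (hcompγ : ∀ x ∈ γ, ∀ y, y ∈ γ ↔ M.ComponentRel x y)
    (hcodim2 : Module.finrank ℝ (vectorSpan ℝ C) = n - 3) :
    (∀ b : Set (Fin n), M.IsBase b ↔ ∃ i ∈ α, ∃ j ∈ β, ∃ l ∈ γ, b = {i, j, l}) ∧
    (∀ D ∈ S, C ⊆ D → Module.finrank ℝ (vectorSpan ℝ D) = n - 2 →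
      (D ⊆ {x | ∑ i ∈ α, x i = 1} ∨ D ⊆ {x | ∑ i ∈ β, x i = 1} ∨
        D ⊆ {x | ∑ i ∈ γ, x i = 1})) ∧
    {D | D ∈ S ∧ C ⊆ D ∧ Module.finrank ℝ (vectorSpan ℝ D) = n - 2}.ncard ≤ 6 :=
  codim_two_cell_structure_general n S hS hmat C hC M hCM hloopfree α β γ hαne hβne hγne hdisjαβ
    hdisjαγ hdisjβγ hcover hcompα hcompβ hcompγ hcodim2
end
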